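/- arXiv:2405.06480 — 9 statements merged into one kernel-verified Lean document; each statement's English description precedes it below -/
import Mathlib

section
/- Let π be a probability vector on [K] with strictly positive entries, let ℓ ∈ [−1,1]^K, let a ∈ [K] and η ∈ (0,1). Define ℓ̃_i = ℓ_i·1{i = a}, λ_i = π_i·π_a·ℓ_a / Σ_{j=1}^K π_j², and π⁺_i = π_i(1 − η(ℓ̃_i − λ_i)). Then: (i) Σ_{i=1}^K π⁺_i = 1; (ii) |ℓ̃_a − λ_a| ≤ |ℓ_a|; (iii) for every i ≠ a, |ℓ̃_i − λ_i| ≤ |ℓ_a|/2; consequently π⁺_i > 0 for every i, so π⁺ is again a probability vector with strictly positive entries. -/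
namespace Stmt2

/-- Masked loss `ℓ̃_i = ℓ_i·1{i = a}`. -/
noncomputable def masked (K : ℕ) (ℓ : Fin K → ℝ) (a i : Fin K) : ℝ :=
  if i = a then ℓ i else 0

/-- LB-Prod normalizer `λ_i = π_i π_a ℓ_a / Σ_j π_j²`. -/
noncomputable def lam (K : ℕ) (π ℓ : Fin K → ℝ) (a i : Fin K) : ℝ :=
  π i * π a * ℓ a / ∑ j, (π j) ^ 2

/-- LB-Prod one-step update `π⁺_i = π_i (1 − η(ℓ̃_i − λ_i))`. -/
noncomputable def upd (K : ℕ) (η : ℝ) (π ℓ : Fin K → ℝ) (a : Fin K) : Fin K → ℝ :=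
  fun i => π i * (1 - η * (masked K ℓ a i - lam K π ℓ a i))

/-- one-step validity of the LB-Prod update: the updated vector sums to one,
`|ℓ̃_a − λ_a| ≤ |ℓ_a|`, `|ℓ̃_i − λ_i| ≤ |ℓ_a|/2` for `i ≠ a`, and consequently all updated
entries are strictly positive. -/
theorem stmt2 (K : ℕ) (π ℓ : Fin K → ℝ) (a : Fin K) (η : ℝ)
    (hpos : ∀ i, 0 < π i) (hsum : ∑ i, π i = 1)
    (hℓ : ∀ i, ℓ i ∈ Set.Icc (-1 : ℝ) 1) (hη0 : 0 < η) (hη1 : η < 1) :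
    (∑ i, upd K η π ℓ a i = 1) ∧
    |masked K ℓ a a - lam K π ℓ a a| ≤ |ℓ a| ∧
    (∀ i, i ≠ a → |masked K ℓ a i - lam K π ℓ a i| ≤ |ℓ a| / 2) ∧
    (∀ i, 0 < upd K η π ℓ a i) := by
  have hS : 0 < ∑ j, (π j) ^ 2 :=
    Finset.sum_pos (fun j _ => pow_pos (hpos j) 2) ⟨a, Finset.mem_univ a⟩
  set S := ∑ j, (π j) ^ 2 with hSdef
  have hfrac0 : 0 ≤ π a ^ 2 / S := by positivity
  have hfrac1 : π a ^ 2 / S ≤ 1 := by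
    rw [div_le_one hS]
    exact Finset.single_le_sum (fun j _ => le_of_lt (pow_pos (hpos j) 2)) (Finset.mem_univ a)
  -- (ii)
  have h2 : |masked K ℓ a a - lam K π ℓ a a| ≤ |ℓ a| := by
    have : masked K ℓ a a - lam K π ℓ a a = ℓ a * (1 - π a ^ 2 / S) := by
      simp only [masked, lam, if_pos rfl, ↓reduceIte, ← hSdef]
      field_simp
    rw [this, abs_mul]
    calc |ℓ a| * |1 - π a ^ 2 / S| ≤ |ℓ a| * 1 := by
          apply mul_le_mul_of_nonneg_left _ (abs_nonneg _)
          rw [abs_le]; constructor <;> nlinarith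
      _ = |ℓ a| := mul_one _
  -- (iii)
  have h3 : ∀ i, i ≠ a → |masked K ℓ a i - lam K π ℓ a i| ≤ |ℓ a| / 2 := by
    intro i hi
    have hmask : masked K ℓ a i = 0 := if_neg hi
    have hpair : π i ^ 2 + π a ^ 2 ≤ S := by
      rw [hSdef]
      have := Finset.sum_pair (f := fun j => π j ^ 2) hi
      calc π i ^ 2 + π a ^ 2 = ∑ j ∈ ({i, a} : Finset (Fin K)), π j ^ 2 := this.symm
        _ ≤ S := Finset.sum_le_sum_of_subset_of_nonneg (Finset.subset_univ _)
            (fun j _ _ => sq_nonneg _)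
    have hprod : π i * π a / S ≤ 1 / 2 := by
      rw [div_le_div_iff₀ hS two_pos]
      nlinarith [sq_nonneg (π i - π a)]
    have hprod0 : 0 ≤ π i * π a / S :=
      div_nonneg (mul_pos (hpos i) (hpos a)).le hS.le
    rw [hmask, zero_sub, abs_neg]
    have : lam K π ℓ a i = (π i * π a / S) * ℓ a := by
      simp only [lam, ← hSdef]; ring
    rw [this, abs_mul, abs_of_nonneg hprod0]
    calc π i * π a / S * |ℓ a| ≤ 1 / 2 * |ℓ a| :=
          mul_le_mul_of_nonneg_right hprod (abs_nonneg _)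
      _ = |ℓ a| / 2 := by ring
  -- bound |masked - lam| ≤ 1 for all i
  have hbound : ∀ i, |masked K ℓ a i - lam K π ℓ a i| ≤ 1 := by
    intro i
    have hla : |ℓ a| ≤ 1 := abs_le.mpr ⟨(hℓ a).1, (hℓ a).2⟩
    by_cases hi : i = a
    · subst hi; exact h2.trans hla
    · exact (h3 i hi).trans (by linarith)
  -- (iv)
  have h4 : ∀ i, 0 < upd K η π ℓ a i := by
    intro i
    have h1 : |η * (masked K ℓ a i - lam K π ℓ a i)| < 1 := by
      rw [abs_mul, abs_of_pos hη0]
      calc η * |masked K ℓ a i - lam K π ℓ a i| ≤ η * 1 :=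
            mul_le_mul_of_nonneg_left (hbound i) hη0.le
        _ < 1 := by linarith
    have := (abs_lt.mp h1).2
    exact mul_pos (hpos i) (by linarith)
  -- (i)
  have h1 : ∑ i, upd K η π ℓ a i = 1 := by
    have hm : ∑ i, π i * masked K ℓ a i = π a * ℓ a := by
      rw [Finset.sum_eq_single a]
      · simp [masked]
      · intro b _ hb; simp [masked, hb]
      · intro h; exact absurd (Finset.mem_univ a) h
    have hl : ∑ i, π i * lam K π ℓ a i = π a * ℓ a := by
      have : ∀ i, π i * lam K π ℓ a i = π i ^ 2 * (π a * ℓ a / S) := by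
        intro i; simp only [lam, ← hSdef]; ring
      rw [Finset.sum_congr rfl (fun i _ => this i), ← Finset.sum_mul, ← hSdef]
      field_simp
    have expand : ∀ i, upd K η π ℓ a i =
        π i - η * (π i * masked K ℓ a i) + η * (π i * lam K π ℓ a i) := by
      intro i; simp only [upd]; ring
    rw [Finset.sum_congr rfl (fun i _ => expand i), Finset.sum_add_distrib,
      Finset.sum_sub_distrib, ← Finset.mul_sum, ← Finset.mul_sum, hm, hl, hsum]
    ring
  exact ⟨h1, h2, h3, h4⟩

end Stmt2
end

section
/- Let π be a probability vector on [K] with strictly positive entries and let ℓ ∈ [−1,1]^K. For a ∈ [K] define ℓ̃_i(a) = ℓ_i·1{a = i} and λ_i(a) = π_i·π_a·ℓ_a / Σ_{j=1}^K π_j². Then for every i ∈ [K]: (1) Σ_{a=1}^K π_a (ℓ̃_i(a) − λ_i(a)) = π_i(ℓ_i − c), where c = Σ_{j=1}^K π_j² ℓ_j / Σ_{j=1}^K π_j² is independent of i and lies in [−1,1]; (2) Σ_{a=1}^K π_a (ℓ̃_i(a) − λ_i(a))² ≤ 2π_i. -/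
namespace Stmt3

/-- Masked loss `ℓ̃_i(a) = ℓ_i·1{a = i}`. -/
noncomputable def masked (K : ℕ) (ℓ : Fin K → ℝ) (a i : Fin K) : ℝ :=
  if a = i then ℓ i else 0

/-- LB-Prod normalizer `λ_i(a) = π_i π_a ℓ_a / Σ_j π_j²`. -/
noncomputable def lam (K : ℕ) (π ℓ : Fin K → ℝ) (a i : Fin K) : ℝ :=
  π i * π a * ℓ a / ∑ j, (π j) ^ 2

/-- first and second moments of the LB-Prod increments under `a ∼ π`:
`Σ_a π_a (ℓ̃_i(a) − λ_i(a)) = π_i (ℓ_i − c)` with `c = Σ_j π_j² ℓ_j / Σ_j π_j² ∈ [−1,1]`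
independent of `i`, and `Σ_a π_a (ℓ̃_i(a) − λ_i(a))² ≤ 2 π_i`. -/
theorem stmt3 (K : ℕ) (π ℓ : Fin K → ℝ)
    (hpos : ∀ i, 0 < π i) (hsum : ∑ i, π i = 1)
    (hℓ : ∀ i, ℓ i ∈ Set.Icc (-1 : ℝ) 1) (i : Fin K) :
    (∑ a, π a * (masked K ℓ a i - lam K π ℓ a i) =
        π i * (ℓ i - (∑ j, (π j) ^ 2 * ℓ j) / ∑ j, (π j) ^ 2)) ∧
    ((∑ j, (π j) ^ 2 * ℓ j) / ∑ j, (π j) ^ 2) ∈ Set.Icc (-1 : ℝ) 1 ∧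
    (∑ a, π a * (masked K ℓ a i - lam K π ℓ a i) ^ 2 ≤ 2 * π i) := by
  have hne : (Finset.univ : Finset (Fin K)).Nonempty := ⟨i, Finset.mem_univ i⟩
  set S : ℝ := ∑ j, (π j) ^ 2 with hSdef
  have hS : 0 < S := Finset.sum_pos (fun j _ => pow_pos (hpos j) 2) hne
  have hπle : ∀ j, π j ≤ 1 := by
    intro j
    calc π j ≤ ∑ a, π a :=
      Finset.single_le_sum (fun a _ => (hpos a).le) (Finset.mem_univ j)
    _ = 1 := hsum
  have hsqle : ∀ j, (π j) ^ 2 ≤ S := fun j =>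
    Finset.single_le_sum (fun a _ => sq_nonneg (π a)) (Finset.mem_univ j)
  have hlam : ∀ a, lam K π ℓ a i = π i * π a * ℓ a / S := fun a => rfl
  -- first moment
  have h1 : ∑ a, π a * masked K ℓ a i = π i * ℓ i := by
    simp [masked, mul_ite, Finset.sum_ite_eq']
  have h2 : ∑ a, π a * lam K π ℓ a i = π i * ((∑ j, (π j) ^ 2 * ℓ j) / S) := by
    have : ∀ a : Fin K, π a * lam K π ℓ a i = π i * ((π a) ^ 2 * ℓ a / S) := by
      intro a; rw [hlam]; field_simp
    rw [Finset.sum_congr rfl (fun a _ => this a), ← Finset.mul_sum, ← Finset.sum_div]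
  have hfirst : ∑ a, π a * (masked K ℓ a i - lam K π ℓ a i) =
      π i * (ℓ i - (∑ j, (π j) ^ 2 * ℓ j) / S) := by
    calc ∑ a, π a * (masked K ℓ a i - lam K π ℓ a i)
        = ∑ a, (π a * masked K ℓ a i - π a * lam K π ℓ a i) := by
          apply Finset.sum_congr rfl; intros; ring
      _ = (∑ a, π a * masked K ℓ a i) - ∑ a, π a * lam K π ℓ a i :=
          Finset.sum_sub_distrib _ _
      _ = π i * (ℓ i - (∑ j, (π j) ^ 2 * ℓ j) / S) := by rw [h1, h2]; ring
  refine ⟨hfirst, ?_, ?_⟩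
  · -- c ∈ [-1,1]
    have habs : |∑ j, (π j) ^ 2 * ℓ j| ≤ S := by
      calc |∑ j, (π j) ^ 2 * ℓ j| ≤ ∑ j, |(π j) ^ 2 * ℓ j| :=
        Finset.abs_sum_le_sum_abs _ _
      _ ≤ ∑ j, (π j) ^ 2 := by
          apply Finset.sum_le_sum
          intro j _
          rw [abs_mul, abs_of_nonneg (sq_nonneg (π j))]
          have hl : |ℓ j| ≤ 1 := abs_le.2 ⟨(hℓ j).1, (hℓ j).2⟩
          nlinarith [sq_nonneg (π j), abs_nonneg (ℓ j)]
      _ = S := rfl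
    have : |(∑ j, (π j) ^ 2 * ℓ j) / S| ≤ 1 := by
      rw [abs_div, abs_of_pos hS, div_le_one hS]
      exact habs
    exact abs_le.1 this
  · -- second moment
    have h2S : (0:ℝ) < 2 * S := by linarith
    have key : ∀ a, π a * (masked K ℓ a i - lam K π ℓ a i) ^ 2 ≤
        (if a = i then π i else 0) + π i * (π a) ^ 2 / (2 * S) := by
      intro a
      have hπ2S : 0 ≤ π i * (π a) ^ 2 / (2 * S) :=
        div_nonneg (mul_nonneg (hpos i).le (sq_nonneg _)) h2S.le
      by_cases ha : a = i
      · subst ha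
        have hm : masked K ℓ a a = ℓ a := if_pos rfl
        rw [hm, hlam, if_pos rfl]
        have hl : |ℓ a| ≤ 1 := abs_le.2 ⟨(hℓ a).1, (hℓ a).2⟩
        have h0 : 0 ≤ (π a) ^ 2 / S := div_nonneg (sq_nonneg _) hS.le
        have h1' : (π a) ^ 2 / S ≤ 1 := (div_le_one hS).2 (hsqle a)
        have habs : |ℓ a - π a * π a * ℓ a / S| ≤ 1 := by
          have he : ℓ a - π a * π a * ℓ a / S = ℓ a * (1 - (π a) ^ 2 / S) := by
            field_simp
          rw [he, abs_mul]
          have h2' : |1 - (π a) ^ 2 / S| ≤ 1 := abs_le.2 ⟨by linarith, by linarith⟩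
          calc |ℓ a| * |1 - (π a) ^ 2 / S| ≤ 1 * 1 :=
            mul_le_mul hl h2' (abs_nonneg _) zero_le_one
          _ = 1 := by ring
        have hsq : (ℓ a - π a * π a * ℓ a / S) ^ 2 ≤ 1 := by
          rw [← sq_abs]
          nlinarith [abs_nonneg (ℓ a - π a * π a * ℓ a / S)]
        calc π a * (ℓ a - π a * π a * ℓ a / S) ^ 2 ≤ π a * 1 :=
          mul_le_mul_of_nonneg_left hsq (hpos a).le
        _ ≤ π a + π a * (π a) ^ 2 / (2 * S) := by
            have : 0 ≤ π a * (π a) ^ 2 / (2 * S) :=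
              div_nonneg (mul_nonneg (hpos a).le (sq_nonneg _)) h2S.le
            linarith
      · have hm : masked K ℓ a i = 0 := if_neg ha
        rw [hm, hlam, if_neg ha]
        have hl : ℓ a ^ 2 ≤ 1 := by
          have hl' : |ℓ a| ≤ 1 := abs_le.2 ⟨(hℓ a).1, (hℓ a).2⟩
          nlinarith [abs_nonneg (ℓ a), sq_abs (ℓ a)]
        have hpair : (π i) ^ 2 + (π a) ^ 2 ≤ S := by
          have he : (π i) ^ 2 + (π a) ^ 2 = ∑ j ∈ ({i, a} : Finset (Fin K)), (π j) ^ 2 := by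
            rw [Finset.sum_pair (Ne.symm ha)]
          rw [he]
          exact Finset.sum_le_sum_of_subset_of_nonneg (Finset.subset_univ _)
            (fun j _ _ => sq_nonneg _)
        have hmul : π i * π a ≤ S / 2 := by nlinarith [sq_nonneg (π i - π a)]
        have hnn : 0 ≤ π i * π a := mul_nonneg (hpos i).le (hpos a).le
        have hkey : (0 - π i * π a * ℓ a / S) ^ 2 ≤ π i * π a / (2 * S) := by
          rw [zero_sub, neg_sq, div_pow, div_le_div_iff₀ (by positivity) h2S]
          calc (π i * π a * ℓ a) ^ 2 * (2 * S)
              = (π i * π a) ^ 2 * (2 * S) * ℓ a ^ 2 := by ring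
            _ ≤ (π i * π a) ^ 2 * (2 * S) * 1 :=
              mul_le_mul_of_nonneg_left hl (mul_nonneg (sq_nonneg _) h2S.le)
            _ = (π i * π a) * (π i * π a) * (2 * S) := by ring
            _ ≤ (π i * π a) * (S / 2) * (2 * S) :=
              mul_le_mul_of_nonneg_right
                (mul_le_mul_of_nonneg_left hmul hnn) h2S.le
            _ = π i * π a * S ^ 2 := by ring
        calc π a * (0 - π i * π a * ℓ a / S) ^ 2 ≤ π a * (π i * π a / (2 * S)) :=
          mul_le_mul_of_nonneg_left hkey (hpos a).le
        _ = 0 + π i * (π a) ^ 2 / (2 * S) := by ring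
    calc ∑ a, π a * (masked K ℓ a i - lam K π ℓ a i) ^ 2
        ≤ ∑ a, ((if a = i then π i else 0) + π i * (π a) ^ 2 / (2 * S)) :=
          Finset.sum_le_sum (fun a _ => key a)
      _ = π i + π i * S / (2 * S) := by
          rw [Finset.sum_add_distrib, Finset.sum_ite_eq' Finset.univ i]
          simp [Finset.mul_sum, Finset.sum_div, mul_div_assoc, hSdef]
      _ ≤ 2 * π i := by
          rw [mul_div_assoc]
          have he : S / (2 * S) = 1 / 2 := by field_simp
          rw [he]
          nlinarith [(hpos i).le]

end Stmt3
end

section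
/- Let η ∈ (0,1), let π be a probability vector on [K] with strictly positive entries, let ℓ ∈ [−1,1]^K, and let u be a probability vector on [K] with strictly positive entries. For each a ∈ [K] let π⁺(a) be the LB-Prod update of π upon drawing arm a, i.e. π⁺_i(a) = π_i(1 − η(ℓ̃_i(a) − λ_i(a))) with ℓ̃_i(a) = ℓ_i·1{a=i} and λ_i(a) = π_i π_a ℓ_a/Σ_j π_j². Then ⟨π − u, ℓ⟩ + (1/η)·Σ_{a=1}^K π_a · D_LB(u, π⁺(a)) − (1/η)·D_LB(u, π) ≤ 2η/(1−η). -/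
namespace Stmt5

/-- Masked loss `ℓ̃_i(a) = ℓ_i·1{a = i}`. -/
noncomputable def masked (K : ℕ) (ℓ : Fin K → ℝ) (a i : Fin K) : ℝ :=
  if a = i then ℓ i else 0

/-- LB-Prod normalizer `λ_i(a) = π_i π_a ℓ_a / Σ_j π_j²`. -/
noncomputable def lam (K : ℕ) (π ℓ : Fin K → ℝ) (a i : Fin K) : ℝ :=
  π i * π a * ℓ a / ∑ j, (π j) ^ 2

/-- LB-Prod one-step update `π⁺_i(a) = π_i (1 − η(ℓ̃_i(a) − λ_i(a)))`. -/
noncomputable def upd (K : ℕ) (η : ℝ) (π ℓ : Fin K → ℝ) (a : Fin K) : Fin K → ℝ :=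
  fun i => π i * (1 - η * (masked K ℓ a i - lam K π ℓ a i))

/-- Bregman divergence of the log-barrier potential
`D_LB(u, p) = Σ_i (u_i/p_i − 1 + log(p_i/u_i))`. -/
noncomputable def DLB (K : ℕ) (u p : Fin K → ℝ) : ℝ :=
  ∑ i, (u i / p i - 1 + Real.log (p i / u i))

/-- Pointwise stability inequality for the log-barrier terms. -/
lemma ptwise (η t p v : ℝ) (hη0 : 0 < η) (hη1 : η < 1) (hp : 0 < p) (hv : 0 < v)
    (ht1 : -η ≤ t) (ht2 : t ≤ η) :
    v / (p * (1 - t)) - v / p + Real.log (1 - t) ≤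
      (v / p) * t - t + (v / p) * t ^ 2 / (1 - η) := by
  have h1t : 0 < 1 - t := by linarith
  have h1η : 0 < 1 - η := by linarith
  have hlog : Real.log (1 - t) ≤ -t := by
    have := Real.log_le_sub_one_of_pos h1t; linarith
  have hc : 0 < v / p := div_pos hv hp
  have e1 : v / (p * (1 - t)) - v / p = (v / p) * (t / (1 - t)) := by
    field_simp
    ring
  have key : t / (1 - t) ≤ t + t ^ 2 / (1 - η) := by
    rw [div_le_iff₀ h1t]
    have hq : 0 ≤ t ^ 2 / (1 - η) := by positivity
    have hqq : t ^ 2 / (1 - η) * (1 - η) = t ^ 2 := div_mul_cancel₀ _ h1η.ne'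
    nlinarith [mul_le_mul_of_nonneg_left (show 1 - η ≤ 1 - t by linarith) hq]
  have hmul := mul_le_mul_of_nonneg_left key hc.le
  have e2 : (v / p) * (t + t ^ 2 / (1 - η)) = (v / p) * t + (v / p) * t ^ 2 / (1 - η) := by
    ring
  rw [e1]
  linarith

/-- per-step stability bound for LB-Prod:
`⟨π − u, ℓ⟩ + (1/η)·E_{a∼π}[D_LB(u, π⁺(a))] − (1/η)·D_LB(u, π) ≤ 2η/(1−η)`. -/
theorem stmt5 (K : ℕ) (η : ℝ) (π ℓ u : Fin K → ℝ)
    (hη0 : 0 < η) (hη1 : η < 1)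
    (hπpos : ∀ i, 0 < π i) (hπsum : ∑ i, π i = 1)
    (hℓ : ∀ i, ℓ i ∈ Set.Icc (-1 : ℝ) 1)
    (hupos : ∀ i, 0 < u i) (husum : ∑ i, u i = 1) :
    (∑ i, (π i - u i) * ℓ i) +
      (1 / η) * (∑ a, π a * DLB K u (upd K η π ℓ a)) - (1 / η) * DLB K u π ≤
      2 * η / (1 - η) := by
  classical
  have h1η : 0 < 1 - η := by linarith
  set S : ℝ := ∑ j, (π j) ^ 2 with hSdef
  have hSle : ∀ i, (π i) ^ 2 ≤ S :=
    fun i => Finset.single_le_sum (f := fun j => (π j) ^ 2)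
      (fun j _ => sq_nonneg _) (Finset.mem_univ i)
  have hK : K ≠ 0 := by rintro rfl; simp at hπsum
  have hS : 0 < S :=
    lt_of_lt_of_le (pow_pos (hπpos ⟨0, Nat.pos_of_ne_zero hK⟩) 2) (hSle _)
  set x : Fin K → Fin K → ℝ := fun a i => masked K ℓ a i - lam K π ℓ a i with hxdef
  have hx_diag : ∀ i, x i i = ℓ i * (1 - (π i) ^ 2 / S) := by
    intro i
    simp only [hxdef, masked, lam, if_pos rfl, ↓reduceIte, ← hSdef]
    field_simp
  have hx_off : ∀ a i, a ≠ i → x a i = -(π i * π a * ℓ a / S) := by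
    intro a i h
    simp [hxdef, masked, lam, if_neg h, ← hSdef]
  have hpair : ∀ a i : Fin K, a ≠ i → π i * π a ≤ S := by
    intro a i h
    have hsub : (π i) ^ 2 + (π a) ^ 2 ≤ S := by
      have := Finset.sum_le_sum_of_subset_of_nonneg
        (Finset.subset_univ ({i, a} : Finset (Fin K)))
        (fun j _ _ => sq_nonneg (π j))
      rwa [Finset.sum_pair (Ne.symm h)] at this
    nlinarith [sq_nonneg (π i - π a)]
  have hxabs : ∀ a i, |x a i| ≤ 1 := by
    intro a i
    rcases eq_or_ne a i with h | h
    · subst h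
      rw [hx_diag a, abs_mul]
      have h1 : 0 ≤ (π a) ^ 2 / S := by positivity
      have h2 : (π a) ^ 2 / S ≤ 1 := div_le_one_of_le₀ (hSle a) hS.le
      have h3 : |ℓ a| ≤ 1 := abs_le.2 ⟨(hℓ a).1, (hℓ a).2⟩
      have h4 : |(1 : ℝ) - (π a) ^ 2 / S| ≤ 1 := by
        rw [abs_le]; constructor <;> linarith
      calc |ℓ a| * |1 - (π a) ^ 2 / S| ≤ 1 * 1 :=
            mul_le_mul h3 h4 (abs_nonneg _) zero_le_one
        _ = 1 := by ring
    · rw [hx_off a i h, abs_neg, abs_div, abs_of_pos hS]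
      rw [div_le_one hS]
      have h3 : |ℓ a| ≤ 1 := abs_le.2 ⟨(hℓ a).1, (hℓ a).2⟩
      have h4 : |π i * π a * ℓ a| = π i * π a * |ℓ a| := by
        rw [abs_mul, abs_of_pos (mul_pos (hπpos i) (hπpos a))]
      rw [h4]
      have := hpair a i h
      nlinarith [mul_pos (hπpos i) (hπpos a)]
  have hxle : ∀ a i, -1 ≤ x a i ∧ x a i ≤ 1 := fun a i => abs_le.1 (hxabs a i)
  have hfacpos : ∀ a i, 0 < 1 - η * x a i := by
    intro a i
    have := (hxle a i).2
    nlinarith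
  have hfacge : ∀ a i, 1 - η ≤ 1 - η * x a i := by
    intro a i
    have := (hxle a i).2
    nlinarith
  have hupd : ∀ a i, upd K η π ℓ a i = π i * (1 - η * x a i) := by
    intro a i; rfl
  -- difference of divergences
  have hD : ∀ a, DLB K u (upd K η π ℓ a) - DLB K u π =
      ∑ i, (u i / (π i * (1 - η * x a i)) - u i / π i + Real.log (1 - η * x a i)) := by
    intro a
    unfold DLB
    rw [← Finset.sum_sub_distrib]
    apply Finset.sum_congr rfl
    intro i _
    rw [hupd]
    have h1 : 0 < 1 - η * x a i := hfacpos a i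
    rw [Real.log_div (mul_pos (hπpos i) h1).ne' (hupos i).ne', Real.log_div (hπpos i).ne' (hupos i).ne',
      Real.log_mul (hπpos i).ne' h1.ne']
    ring
  -- pointwise bound, multiplied by π a
  have hpt : ∀ a i,
      π a * (u i / (π i * (1 - η * x a i)) - u i / π i + Real.log (1 - η * x a i)) ≤
      π a * ((u i / π i) * (η * x a i) - η * x a i + (u i / π i) * (η * x a i) ^ 2 / (1 - η)) := by
    intro a i
    apply mul_le_mul_of_nonneg_left _ (hπpos a).le
    apply ptwise η (η * x a i) (π i) (u i) hη0 hη1 (hπpos i) (hupos i)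
    · nlinarith [(hxle a i).1]
    · nlinarith [(hxle a i).2]
  -- the linear-term identity
  have hI : ∑ a, ∑ i, π a * ((u i / π i - 1) * x a i) = ∑ i, (u i - π i) * ℓ i := by
    have h1 : ∀ a : Fin K, ∑ i, π a * ((u i / π i - 1) * x a i)
        = (u a - π a) * ℓ a - (π a) ^ 2 * ℓ a / S * (∑ i, (u i - π i)) := by
      intro a
      have h2 : ∀ i : Fin K, π a * ((u i / π i - 1) * x a i)
          = (if a = i then (u a - π a) * ℓ a else 0) - (π a) ^ 2 * ℓ a / S * (u i - π i) := by
        intro i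
        have hpi := (hπpos i).ne'
        have hSne := hS.ne'
        simp only [hxdef, masked, lam, ← hSdef]
        split_ifs with h
        · subst h
          field_simp
        · field_simp
          ring
      rw [Finset.sum_congr rfl (fun i _ => h2 i), Finset.sum_sub_distrib,
        Finset.sum_ite_eq, if_pos (Finset.mem_univ a), ← Finset.mul_sum]
    rw [Finset.sum_congr rfl (fun a _ => h1 a)]
    have hz : ∑ i, (u i - π i) = 0 := by
      rw [Finset.sum_sub_distrib, husum, hπsum]; ring
    simp [hz]
  -- the quadratic-term bound
  have hB : ∑ a, ∑ i, π a * (u i / π i) * (x a i) ^ 2 ≤ 2 := by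
    have hterm : ∀ a i, π a * (u i / π i) * (x a i) ^ 2 ≤
        (if a = i then u i else 0) + (π a) ^ 3 * (u i * π i) / S ^ 2 := by
      intro a i
      rcases eq_or_ne a i with h | h
      · subst h
        rw [if_pos rfl]
        have e : π a * (u a / π a) * (x a a) ^ 2 = u a * (x a a) ^ 2 := by
          have hpa := (hπpos a).ne'
          field_simp
        rw [e]
        have hx2 : (x a a) ^ 2 ≤ 1 := by
          nlinarith [(hxle a a).1, (hxle a a).2]
        have : u a * (x a a) ^ 2 ≤ u a := by nlinarith [(hupos a).le]
        have hnn : 0 ≤ (π a) ^ 3 * (u a * π a) / S ^ 2 :=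
          (div_pos (mul_pos (pow_pos (hπpos a) 3) (mul_pos (hupos a) (hπpos a)))
            (pow_pos hS 2)).le
        exact le_trans this (le_add_of_nonneg_right hnn)
      · rw [if_neg h, hx_off a i h, zero_add]
        have hl2 : (ℓ a) ^ 2 ≤ 1 := by nlinarith [(hℓ a).1, (hℓ a).2]
        have e : π a * (u i / π i) * (-(π i * π a * ℓ a / S)) ^ 2
            = (π a) ^ 3 * (u i * π i) / S ^ 2 * (ℓ a) ^ 2 := by
          have hpi := (hπpos i).ne'
          have hSne := hS.ne'
          field_simp
        rw [e]
        have hnn : 0 ≤ (π a) ^ 3 * (u i * π i) / S ^ 2 :=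
          (div_pos (mul_pos (pow_pos (hπpos a) 3) (mul_pos (hupos i) (hπpos i)))
            (pow_pos hS 2)).le
        nlinarith
    calc ∑ a, ∑ i, π a * (u i / π i) * (x a i) ^ 2
        ≤ ∑ a, ∑ i, ((if a = i then u i else 0) + (π a) ^ 3 * (u i * π i) / S ^ 2) :=
          Finset.sum_le_sum fun a _ => Finset.sum_le_sum fun i _ => hterm a i
      _ = 1 + (∑ a, (π a) ^ 3) * (∑ i, u i * π i) / S ^ 2 := by
          have hstep : ∀ a : Fin K,
              ∑ i, ((if a = i then u i else 0) + (π a) ^ 3 * (u i * π i) / S ^ 2)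
              = u a + (π a) ^ 3 * (∑ i, u i * π i) / S ^ 2 := by
            intro a
            rw [Finset.sum_add_distrib, Finset.sum_ite_eq, if_pos (Finset.mem_univ a)]
            congr 1
            rw [← Finset.sum_div, ← Finset.mul_sum]
          rw [Finset.sum_congr rfl (fun a _ => hstep a), Finset.sum_add_distrib, husum]
          congr 1
          rw [← Finset.sum_div, ← Finset.sum_mul]
      _ ≤ 1 + 1 := by
          have hsqrt : ∀ i, π i ≤ Real.sqrt S := by
            intro i
            calc π i = Real.sqrt ((π i) ^ 2) := (Real.sqrt_sq (hπpos i).le).symm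
              _ ≤ Real.sqrt S := Real.sqrt_le_sqrt (hSle i)
          have h3 : ∑ a, (π a) ^ 3 ≤ Real.sqrt S * S := by
            calc ∑ a, (π a) ^ 3 = ∑ a, π a * (π a) ^ 2 := by
                  apply Finset.sum_congr rfl; intro a _; ring
              _ ≤ ∑ a, Real.sqrt S * (π a) ^ 2 :=
                  Finset.sum_le_sum fun a _ =>
                    mul_le_mul_of_nonneg_right (hsqrt a) (sq_nonneg _)
              _ = Real.sqrt S * S := by rw [← Finset.mul_sum]
          have h4 : ∑ i, u i * π i ≤ Real.sqrt S := by
            calc ∑ i, u i * π i ≤ ∑ i, u i * Real.sqrt S :=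
                  Finset.sum_le_sum fun i _ =>
                    mul_le_mul_of_nonneg_left (hsqrt i) (hupos i).le
              _ = Real.sqrt S := by rw [← Finset.sum_mul, husum, one_mul]
          have h5 : (∑ a, (π a) ^ 3) * (∑ i, u i * π i) ≤ S ^ 2 := by
            have h7 : 0 ≤ ∑ i, u i * π i :=
              Finset.sum_nonneg fun i _ => (mul_pos (hupos i) (hπpos i)).le
            calc (∑ a, (π a) ^ 3) * (∑ i, u i * π i)
                ≤ (Real.sqrt S * S) * Real.sqrt S := by
                  exact mul_le_mul h3 h4 h7 (mul_nonneg (Real.sqrt_nonneg _) hS.le)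
              _ = S ^ 2 := by
                  rw [show Real.sqrt S * S * Real.sqrt S = (Real.sqrt S * Real.sqrt S) * S by ring,
                    Real.mul_self_sqrt hS.le]
                  ring
            
          have : (∑ a, (π a) ^ 3) * (∑ i, u i * π i) / S ^ 2 ≤ 1 :=
            div_le_one_of_le₀ h5 (by positivity)
          linarith
      _ = 2 := by norm_num
  -- assemble
  have hmain : ∑ a, π a * DLB K u (upd K η π ℓ a) - DLB K u π ≤
      η * (∑ i, (u i - π i) * ℓ i) + η ^ 2 / (1 - η) * 2 := by
    have e0 : ∑ a, π a * DLB K u (upd K η π ℓ a) - DLB K u π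
        = ∑ a, π a * (DLB K u (upd K η π ℓ a) - DLB K u π) := by
      rw [Finset.sum_congr rfl (fun a _ => mul_sub (π a) _ _), Finset.sum_sub_distrib,
        ← Finset.sum_mul, hπsum, one_mul]
    rw [e0]
    have e1 : ∑ a, π a * (DLB K u (upd K η π ℓ a) - DLB K u π)
        = ∑ a, ∑ i, π a * (u i / (π i * (1 - η * x a i)) - u i / π i
            + Real.log (1 - η * x a i)) := by
      apply Finset.sum_congr rfl
      intro a _
      rw [hD a, Finset.mul_sum]
    rw [e1]
    have e2 : ∑ a, ∑ i, π a * ((u i / π i) * (η * x a i) - η * x a i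
          + (u i / π i) * (η * x a i) ^ 2 / (1 - η))
        = η * (∑ a, ∑ i, π a * ((u i / π i - 1) * x a i))
          + η ^ 2 / (1 - η) * (∑ a, ∑ i, π a * (u i / π i) * (x a i) ^ 2) := by
      rw [Finset.mul_sum, Finset.mul_sum, ← Finset.sum_add_distrib]
      apply Finset.sum_congr rfl
      intro a _
      rw [Finset.mul_sum, Finset.mul_sum, ← Finset.sum_add_distrib]
      apply Finset.sum_congr rfl
      intro i _
      ring
    have hle1 : ∑ a, ∑ i, π a * (u i / (π i * (1 - η * x a i)) - u i / π i
          + Real.log (1 - η * x a i))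
        ≤ ∑ a, ∑ i, π a * ((u i / π i) * (η * x a i) - η * x a i
          + (u i / π i) * (η * x a i) ^ 2 / (1 - η)) :=
      Finset.sum_le_sum fun a _ => Finset.sum_le_sum fun i _ => hpt a i
    rw [e2, hI] at hle1
    have hq : 0 ≤ η ^ 2 / (1 - η) := by positivity
    nlinarith [mul_le_mul_of_nonneg_left hB hq]
  -- finish
  have hne : η ≠ 0 := hη0.ne'
  have hfin : (1 / η) * (∑ a, π a * DLB K u (upd K η π ℓ a)) - (1 / η) * DLB K u π
      ≤ (∑ i, (u i - π i) * ℓ i) + 2 * η / (1 - η) := by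
    have e : (1 / η) * (∑ a, π a * DLB K u (upd K η π ℓ a)) - (1 / η) * DLB K u π
        = (1 / η) * (∑ a, π a * DLB K u (upd K η π ℓ a) - DLB K u π) := by ring
    rw [e]
    have h2 := mul_le_mul_of_nonneg_left hmain (by positivity : (0:ℝ) ≤ 1 / η)
    have e2 : (1 / η) * (η * (∑ i, (u i - π i) * ℓ i) + η ^ 2 / (1 - η) * 2)
        = (∑ i, (u i - π i) * ℓ i) + 2 * η / (1 - η) := by
      field_simp
    linarith
  have hflip : ∑ i, (π i - u i) * ℓ i = -(∑ i, (u i - π i) * ℓ i) := by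
    rw [← Finset.sum_neg_distrib]
    apply Finset.sum_congr rfl
    intro i _
    ring
  linarith

end Stmt5
end

section
/- Let η > 0, C > 0, let π be a probability vector on [K] satisfying π_i > C²η² for all i, and let ℓ ∈ [0,1]^K. For a ∈ [K] define ℓ̃_i(a) = (ℓ_i − η(C − (13/2)π_i)/√π_i)·1{a = i} and λ_i(a) = π_i·Σ_j √π_j ℓ̃_j(a) / Σ_j π_j^{3/2}, and assume |ℓ̃_i(a)| ≤ 1 for all i, a. Then for every i: (1) Σ_{a=1}^K π_a (ℓ̃_i(a) − λ_i(a)) = π_i(ℓ_i − c) − η√π_i·(C − (13/2)π_i), where c = Σ_{a} π_a^{3/2}(ℓ_a − η(C − (13/2)π_a)/√π_a)/Σ_j π_j^{3/2} is independent of i; (2) Σ_{a=1}^K π_a (ℓ̃_i(a) − λ_i(a))² ≤ (13/8)·π_i(1 − π_i). -/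
namespace Stmt7

/-- Biased masked TS-Prod loss
`ℓ̃_i(a) = (ℓ_i − η(C − (13/2)π_i)/√π_i)·1{a = i}`. -/
noncomputable def tl (K : ℕ) (η C : ℝ) (π ℓ : Fin K → ℝ) (a i : Fin K) : ℝ :=
  if a = i then ℓ i - η * (C - (13 / 2) * π i) / Real.sqrt (π i) else 0

/-- TS-Prod normalizer `λ_i(a) = π_i · Σ_j √π_j ℓ̃_j(a) / Σ_j π_j^{3/2}`. -/
noncomputable def lamTS (K : ℕ) (η C : ℝ) (π ℓ : Fin K → ℝ) (a i : Fin K) : ℝ :=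
  π i * (∑ j, Real.sqrt (π j) * tl K η C π ℓ a j) / ∑ j, Real.sqrt (π j) * π j

theorem master2 (s t : ℝ) (hs : 0 ≤ s) (ht : 0 ≤ t) (h1 : s^2 + t^2 ≤ 1) :
    t^6 + s^2*t^4 ≤ (13/8) * (1-s^2) * (s^3+t^3)^2 := by
  have hm1 : 0 ≤ s^3*t^3 := mul_nonneg (pow_nonneg hs 3) (pow_nonneg ht 3)
  have hm2 : 0 ≤ s^6 := pow_nonneg hs 6
  have hm3 : 0 ≤ t^6 := pow_nonneg ht 6
  have key : 0 ≤ t^3*(t-s)^2*(t+2*s) :=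
    mul_nonneg (mul_nonneg (pow_nonneg ht 3) (sq_nonneg _)) (by linarith)
  have key2 : 0 ≤ s^3*(s-t)^2*(s+2*t) :=
    mul_nonneg (mul_nonneg (pow_nonneg hs 3) (sq_nonneg _)) (by linarith)
  have hQ6 : 0 ≤ (13/8)*s^6 + 2*(13/8)*s^3*t^3 + (5/8)*t^6 - s^2*t^4 := by nlinarith [key]
  have hR : 0 ≤ (13/8)*s^6*t^2 + 2*(13/8)*s^3*t^5 + (5/8)*t^8 - s^4*t^4 - 2*s^2*t^6 := by
    nlinarith [mul_nonneg key2 (sq_nonneg t), sq_nonneg (t*(t^2 - 2*s^2)),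
      mul_nonneg (sq_nonneg (t*(t^2-2*s^2))) (sq_nonneg t),
      mul_nonneg hm1 (sq_nonneg t), mul_nonneg hm2 (sq_nonneg t), mul_nonneg hm3 (sq_nonneg t)]
  have hg : 0 ≤ 1 - s^2 - t^2 := by linarith
  nlinarith [mul_nonneg hg hQ6, hR]

set_option maxHeartbeats 1000000 in
theorem final_aux (s t V bi X : ℝ) (hm : t^6 + s^2*t^4 ≤ 13/8*(1-s^2)*X)
    (hV : V ≤ t^4) (hb : bi^2 ≤ 1) (hs : 0 ≤ s) (ht : 0 ≤ t) :
    s^2*bi^2*(t^3)^2 + (s^2)^2*V ≤ 13/8*(s^2*(1-s^2))*X := by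
  nlinarith [mul_le_mul_of_nonneg_left hm (sq_nonneg s),
    mul_le_mul_of_nonneg_left hV (pow_nonneg hs 4),
    mul_nonneg (mul_nonneg (sq_nonneg s) (pow_nonneg ht 6)) (sub_nonneg.2 hb)]

set_option maxHeartbeats 1000000 in
/-- moments of the TS-Prod biased loss estimator under `a ∼ π`:
`Σ_a π_a (ℓ̃_i(a) − λ_i(a)) = π_i(ℓ_i − c) − η √π_i (C − (13/2)π_i)` with
`c = Σ_a π_a^{3/2}(ℓ_a − η(C − (13/2)π_a)/√π_a) / Σ_j π_j^{3/2}` independent of `i`,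
and `Σ_a π_a (ℓ̃_i(a) − λ_i(a))² ≤ (13/8) π_i (1 − π_i)`. -/
theorem stmt7 (K : ℕ) (η C : ℝ) (π ℓ : Fin K → ℝ)
    (hη : 0 < η) (hC : 0 < C)
    (hπnn : ∀ i, 0 ≤ π i) (hπsum : ∑ i, π i = 1)
    (hπlb : ∀ i, C ^ 2 * η ^ 2 < π i)
    (hℓ : ∀ i, ℓ i ∈ Set.Icc (0 : ℝ) 1)
    (hbd : ∀ i a, |tl K η C π ℓ a i| ≤ 1) (i : Fin K) :
    (∑ a, π a * (tl K η C π ℓ a i - lamTS K η C π ℓ a i) =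
        π i * (ℓ i -
            (∑ a, Real.sqrt (π a) * π a *
                (ℓ a - η * (C - (13 / 2) * π a) / Real.sqrt (π a))) /
              ∑ j, Real.sqrt (π j) * π j) -
          η * Real.sqrt (π i) * (C - (13 / 2) * π i)) ∧
    (∑ a, π a * (tl K η C π ℓ a i - lamTS K η C π ℓ a i) ^ 2 ≤
        (13 / 8) * (π i * (1 - π i))) := by
  have hπpos : ∀ j, 0 < π j := fun j => lt_trans (by positivity) (hπlb j)
  have hsqpos : ∀ j, 0 < Real.sqrt (π j) := fun j => Real.sqrt_pos.2 (hπpos j)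
  have hsq : ∀ j, Real.sqrt (π j) * Real.sqrt (π j) = π j :=
    fun j => Real.mul_self_sqrt (hπpos j).le
  set b : Fin K → ℝ := fun j => ℓ j - η * (C - (13 / 2) * π j) / Real.sqrt (π j) with hbdef
  have htl : ∀ a j : Fin K, tl K η C π ℓ a j = if a = j then b j else 0 := by
    intro a j; simp only [tl, hbdef]
  set S : ℝ := ∑ j, Real.sqrt (π j) * π j with hSdef
  have hSpos : 0 < S :=
    Finset.sum_pos (fun j _ => mul_pos (hsqpos j) (hπpos j)) ⟨i, Finset.mem_univ i⟩
  have hSne : S ≠ 0 := hSpos.ne'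
  have hsumtl : ∀ a : Fin K,
      (∑ j, Real.sqrt (π j) * tl K η C π ℓ a j) = Real.sqrt (π a) * b a := by
    intro a
    rw [Finset.sum_eq_single a (fun j _ hj => by rw [htl, if_neg (Ne.symm hj), mul_zero])
      (fun h => absurd (Finset.mem_univ a) h)]
    rw [htl, if_pos rfl]
  have hlam : ∀ a : Fin K,
      lamTS K η C π ℓ a i = π i * (Real.sqrt (π a) * b a) / S := by
    intro a
    unfold lamTS
    rw [hsumtl a, ← hSdef]
  have hb2 : ∀ a : Fin K, (b a)^2 ≤ 1 := by
    intro a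
    have h := hbd a a
    rw [htl, if_pos rfl] at h
    have h2 := abs_le.mp h
    nlinarith [h2.1, h2.2, sq_nonneg (b a - 1), sq_nonneg (b a + 1)]
  constructor
  · have hsum1 : ∑ a, π a * tl K η C π ℓ a i = π i * b i := by
      rw [Finset.sum_eq_single i (fun a _ ha => by rw [htl, if_neg ha, mul_zero])
        (fun h => absurd (Finset.mem_univ i) h)]
      rw [htl, if_pos rfl]
    have hsum2 : ∑ a, π a * lamTS K η C π ℓ a i
        = π i * (∑ a, Real.sqrt (π a) * π a * b a) / S := by
      have h1 : ∀ a ∈ Finset.univ, π a * lamTS K η C π ℓ a i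
          = π i * (Real.sqrt (π a) * π a * b a) / S := fun a _ => by rw [hlam a]; ring
      rw [Finset.sum_congr rfl h1, ← Finset.sum_div, ← Finset.mul_sum]
    have hdivaux : ∀ x : ℝ, π i * (x / Real.sqrt (π i)) = Real.sqrt (π i) * x := by
      intro x
      have hne := (hsqpos i).ne'
      field_simp
      first
      | linear_combination x * hsq i
      | linear_combination (-x) * hsq i
    have key : π i * b i = π i * ℓ i - η * Real.sqrt (π i) * (C - (13 / 2) * π i) := by
      simp only [hbdef]
      rw [mul_sub, hdivaux (η * (C - (13 / 2) * π i))]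
      ring
    have hLHS : (∑ a, π a * (tl K η C π ℓ a i - lamTS K η C π ℓ a i))
        = (∑ a, π a * tl K η C π ℓ a i) - ∑ a, π a * lamTS K η C π ℓ a i := by
      rw [← Finset.sum_sub_distrib]
      exact Finset.sum_congr rfl fun a _ => by ring
    rw [hLHS, hsum1, hsum2]
    simp only [hbdef] at key ⊢
    linear_combination key
  · set p := π i with hp
    have hppos : 0 < p := hπpos i
    set s := Real.sqrt p with hs
    have hsnn : 0 ≤ s := Real.sqrt_nonneg p
    have hs2 : s^2 = p := Real.sq_sqrt hppos.le
    have hq : ∑ a ∈ Finset.univ.erase i, π a = 1 - p := by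
      have h := Finset.sum_erase_add Finset.univ π (Finset.mem_univ i)
      rw [hπsum] at h
      linarith
    have hqnn : 0 ≤ 1 - p := by
      have h : 0 ≤ ∑ a ∈ Finset.univ.erase i, π a :=
        Finset.sum_nonneg fun a _ => hπnn a
      linarith
    set r := Real.sqrt (1 - p) with hr
    have hrnn : 0 ≤ r := Real.sqrt_nonneg _
    have hr2 : r^2 = 1 - p := Real.sq_sqrt hqnn
    set B := ∑ a ∈ Finset.univ.erase i, Real.sqrt (π a) * π a with hB
    have hBnn : 0 ≤ B :=
      Finset.sum_nonneg fun a _ => mul_nonneg (Real.sqrt_nonneg _) (hπnn a)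
    set t : ℝ := B ^ ((1:ℝ)/3) with htdef
    have htnn : 0 ≤ t := Real.rpow_nonneg hBnn _
    have ht3 : t^3 = B := by
      rw [htdef, ← Real.rpow_natCast (B ^ ((1:ℝ)/3)) 3, ← Real.rpow_mul hBnn]
      norm_num
    have hSB : S = s * p + B := by
      have h1 : Real.sqrt (π i) * π i + (∑ a ∈ Finset.univ.erase i, Real.sqrt (π a) * π a)
          = ∑ j, Real.sqrt (π j) * π j :=
        Finset.add_sum_erase _ (fun j => Real.sqrt (π j) * π j) (Finset.mem_univ i)
      rw [hSdef, hB, ← h1, ← hp, ← hs]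
    have hS : S = s^3 + t^3 := by
      rw [hSB, ht3, ← hs2]; ring
    have hπle : ∀ a ∈ Finset.univ.erase i, π a ≤ 1 - p := by
      intro a ha
      have h := Finset.single_le_sum (f := π) (fun j _ => hπnn j) ha
      linarith [hq]
    have hBr : B ≤ r^3 := by
      have h1 : B ≤ ∑ a ∈ Finset.univ.erase i, r * π a := by
        apply Finset.sum_le_sum
        intro a ha
        have h2 : Real.sqrt (π a) ≤ r := by
          rw [hr]; exact Real.sqrt_le_sqrt (hπle a ha)
        exact mul_le_mul_of_nonneg_right h2 (hπnn a)
      rw [← Finset.mul_sum, hq] at h1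
      calc B ≤ r * (1 - p) := h1
        _ = r^3 := by rw [← hr2]; ring
    have htr : t ≤ r := by
      have h3 : t^3 ≤ r^3 := by rw [ht3]; exact hBr
      exact le_of_pow_le_pow_left₀ (by norm_num) hrnn h3
    have hst1 : s^2 + t^2 ≤ 1 := by
      nlinarith [pow_le_pow_left₀ htnn htr 2]
    have hsa : ∀ a ∈ Finset.univ.erase i, Real.sqrt (π a) ≤ t := by
      intro a ha
      have h1 : Real.sqrt (π a) * π a ≤ B :=
        Finset.single_le_sum (fun j _ => mul_nonneg (Real.sqrt_nonneg _) (hπnn j)) ha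
      have h2 : (Real.sqrt (π a))^3 = Real.sqrt (π a) * π a := by
        rw [pow_succ, sq, hsq a, mul_comm]
      have h3 : (Real.sqrt (π a))^3 ≤ t^3 := by rw [h2, ht3]; exact h1
      exact le_of_pow_le_pow_left₀ (by norm_num) htnn h3
    have hV : (∑ a ∈ Finset.univ.erase i, (π a * b a)^2) ≤ t^4 := by
      have h1 : ∀ a ∈ Finset.univ.erase i,
          (π a * b a)^2 ≤ t * (Real.sqrt (π a) * π a) := by
        intro a ha
        have e2 : Real.sqrt (π a) * Real.sqrt (π a) * π a = π a * π a := by rw [hsq a]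
        nlinarith [hb2 a, hπnn a, Real.sqrt_nonneg (π a), e2,
          mul_nonneg (sub_nonneg.2 (hsa a ha)) (mul_nonneg (Real.sqrt_nonneg (π a)) (hπnn a)),
          mul_nonneg (mul_nonneg (hπnn a) (hπnn a)) (sub_nonneg.2 (hb2 a))]
      calc (∑ a ∈ Finset.univ.erase i, (π a * b a)^2)
          ≤ ∑ a ∈ Finset.univ.erase i, t * (Real.sqrt (π a) * π a) :=
            Finset.sum_le_sum h1
        _ = t * B := by rw [← Finset.mul_sum, ← hB]
        _ = t^4 := by rw [← ht3]; ring
    have hsplit : (∑ a, π a * (tl K η C π ℓ a i - lamTS K η C π ℓ a i)^2)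
        = π i * (tl K η C π ℓ i i - lamTS K η C π ℓ i i)^2
          + ∑ a ∈ Finset.univ.erase i, π a * (tl K η C π ℓ a i - lamTS K η C π ℓ a i)^2 :=
      (Finset.add_sum_erase _ _ (Finset.mem_univ i)).symm
    have hfi : π i * (tl K η C π ℓ i i - lamTS K η C π ℓ i i)^2
        = p * (b i)^2 * B^2 / S^2 := by
      rw [htl, if_pos rfl, hlam i, ← hp, ← hs]
      have hdiff : b i - p * (s * b i) / S = b i * B / S := by
        field_simp
        linear_combination (b i) * hSB
      rw [hdiff]
      ring
    have hoff : ∀ a ∈ Finset.univ.erase i,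
        π a * (tl K η C π ℓ a i - lamTS K η C π ℓ a i)^2
          = p^2 / S^2 * (π a * b a)^2 := by
      intro a ha
      have ha' : a ≠ i := Finset.ne_of_mem_erase ha
      rw [htl, if_neg ha', hlam a]
      have h0 : (0 - p * (Real.sqrt (π a) * b a) / S)^2
          = p^2 * ((Real.sqrt (π a) * Real.sqrt (π a)) * (b a)^2) / S^2 := by ring
      rw [h0, hsq a]
      ring
    have hsumoff : (∑ a ∈ Finset.univ.erase i, π a * (tl K η C π ℓ a i - lamTS K η C π ℓ a i)^2)
        = p^2 / S^2 * ∑ a ∈ Finset.univ.erase i, (π a * b a)^2 := by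
      rw [Finset.sum_congr rfl hoff, ← Finset.mul_sum]
    have hmaster := master2 s t hsnn htnn hst1
    have hbi2 : (b i)^2 ≤ 1 := hb2 i
    rw [hsplit, hfi, hsumoff]
    have hcomb : p * (b i)^2 * B^2 / S^2
        + p^2 / S^2 * (∑ a ∈ Finset.univ.erase i, (π a * b a)^2)
        = (p * (b i)^2 * B^2 + p^2 * (∑ a ∈ Finset.univ.erase i, (π a * b a)^2)) / S^2 := by
      ring
    have hS2pos : (0:ℝ) < S^2 := pow_pos hSpos 2
    rw [hcomb, div_le_iff₀ hS2pos]
    rw [← hs2, ← ht3, hS]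
    exact final_aux s t _ (b i) ((s^3+t^3)^2) hmaster hV hbi2 hsnn htnn

end Stmt7
end

section
/- Let π be a probability vector on [K] with strictly positive entries and let ℓ ∈ [−1,1]^K. Then for every i ∈ [K], Σ_{a=1}^K π_a · (ℓ_i·1{a = i} − π_i·√π_a·ℓ_a / Σ_{j=1}^K π_j^{3/2})² ≤ 5·π_i·(1 − π_i). -/
set_option maxHeartbeats 1000000 in
/-- If `π` is a probability vector on `[K]` with strictly positive
entries and `ℓ ∈ [−1,1]^K`, then for every `i`,
`Σ_a π_a (ℓ_i·1{a=i} − π_i √π_a ℓ_a / Σ_j π_j^{3/2})² ≤ 5 π_i (1 − π_i)`. -/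
theorem stmt13 (K : ℕ) (π : Fin K → ℝ) (hpos : ∀ i, 0 < π i) (hsum : ∑ i, π i = 1)
    (ℓ : Fin K → ℝ) (hℓ : ∀ i, ℓ i ∈ Set.Icc (-1 : ℝ) 1) (i : Fin K) :
    ∑ a, π a * ((if a = i then ℓ i else 0) -
        π i * Real.sqrt (π a) * ℓ a / ∑ j, Real.sqrt (π j) * π j) ^ 2 ≤
      5 * (π i * (1 - π i)) := by
  classical
  have hπ1 : ∀ a, π a ≤ 1 := by
    intro a
    rw [← hsum]
    exact Finset.single_le_sum (fun b _ => (hpos b).le) (Finset.mem_univ a)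
  have hf0 : ∀ a : Fin K, 0 ≤ Real.sqrt (π a) * π a := fun a =>
    mul_nonneg (Real.sqrt_nonneg _) (hpos a).le
  set S := ∑ j, Real.sqrt (π j) * π j with hSdef
  have hfS : Real.sqrt (π i) * π i ≤ S :=
    Finset.single_le_sum (fun b _ => hf0 b) (Finset.mem_univ i)
  have hSpos : 0 < S := by
    have h := mul_pos (Real.sqrt_pos.mpr (hpos i)) (hpos i)
    linarith
  have hp0 : 0 < π i := hpos i
  have hp1 : π i ≤ 1 := hπ1 i
  set T := ∑ a ∈ Finset.univ.erase i, Real.sqrt (π a) * π a with hTdef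
  set R := ∑ a ∈ Finset.univ.erase i, (π a) ^ 2 with hRdef
  have hT0 : 0 ≤ T := Finset.sum_nonneg fun a _ => hf0 a
  have hR0 : 0 ≤ R := Finset.sum_nonneg fun a _ => sq_nonneg _
  have hTS : T + Real.sqrt (π i) * π i = S :=
    Finset.sum_erase_add _ _ (Finset.mem_univ i)
  have hsum' : (∑ a ∈ Finset.univ.erase i, π a) + π i = 1 := by
    rw [Finset.sum_erase_add _ _ (Finset.mem_univ i)]; exact hsum
  have hT1p : T ≤ 1 - π i := by
    have h1 : T ≤ ∑ a ∈ Finset.univ.erase i, π a := by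
      apply Finset.sum_le_sum
      intro a _
      have h2 : Real.sqrt (π a) ≤ 1 := Real.sqrt_le_one.mpr (hπ1 a)
      nlinarith [(hpos a).le, Real.sqrt_nonneg (π a)]
    linarith
  have hTleS : T ≤ S := by nlinarith [hf0 i]
  have hR1p : R ≤ (1 - π i) ^ 2 := by
    have hle : ∀ a ∈ Finset.univ.erase i, (π a) ^ 2 ≤ π a * (1 - π i) := by
      intro a ha
      have h1 : π a ≤ ∑ b ∈ Finset.univ.erase i, π b :=
        Finset.single_le_sum (fun b _ => (hpos b).le) ha
      nlinarith [(hpos a).le]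
    calc R ≤ ∑ a ∈ Finset.univ.erase i, π a * (1 - π i) := Finset.sum_le_sum hle
      _ = (1 - π i) ^ 2 := by
          rw [← Finset.sum_mul]
          have h : ∑ a ∈ Finset.univ.erase i, π a = 1 - π i := by linarith
          rw [h]; ring
  -- key lemma: R * π i ≤ S ^ 2
  have hkey : R * π i ≤ S ^ 2 := by
    have hterm : ∀ a ∈ Finset.univ.erase i,
        (π a) ^ 2 * π i ≤ (Real.sqrt (π a) * π a) * S := by
      intro a ha
      have hfa : Real.sqrt (π a) * π a ≤ T := Finset.single_le_sum (fun b _ => hf0 b) ha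
      have hfiS : Real.sqrt (π a) * π a + Real.sqrt (π i) * π i ≤ S := by linarith
      have hxx : Real.sqrt (π a) * Real.sqrt (π a) = π a := Real.mul_self_sqrt (hpos a).le
      have hyy : Real.sqrt (π i) * Real.sqrt (π i) = π i := Real.mul_self_sqrt (hpos i).le
      have hstep : (π a) ^ 2 * π i ≤
          (Real.sqrt (π a) * π a) * (Real.sqrt (π a) * π a + Real.sqrt (π i) * π i) := by
        rcases le_total (π i) (π a) with h | h
        · have hcross : 0 ≤ (Real.sqrt (π a) * π a) * (Real.sqrt (π i) * π i) :=
            mul_nonneg (hf0 a) (hf0 i)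
          nlinarith [sq_nonneg (π a), (hpos a).le]
        · have hsq : Real.sqrt (π a) ≤ Real.sqrt (π i) := Real.sqrt_le_sqrt h
          have hcube : 0 ≤ (Real.sqrt (π a) * π a) * (Real.sqrt (π a) * π a) :=
            mul_nonneg (hf0 a) (hf0 a)
          have h1 : (π a) ^ 2 * π i ≤ (Real.sqrt (π a) * π a) * (Real.sqrt (π i) * π i) := by
            calc (π a) ^ 2 * π i = (Real.sqrt (π a) * π a) * (Real.sqrt (π a) * π i) := by
                  linear_combination (-(π a * π i)) * hxx
              _ ≤ (Real.sqrt (π a) * π a) * (Real.sqrt (π i) * π i) :=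
                  mul_le_mul_of_nonneg_left
                    (mul_le_mul_of_nonneg_right hsq (hpos i).le) (hf0 a)
          nlinarith [h1, hcube]
      calc (π a) ^ 2 * π i ≤ _ := hstep
        _ ≤ (Real.sqrt (π a) * π a) * S := mul_le_mul_of_nonneg_left hfiS (hf0 a)
    calc R * π i = ∑ a ∈ Finset.univ.erase i, (π a) ^ 2 * π i := by rw [Finset.sum_mul]
      _ ≤ ∑ a ∈ Finset.univ.erase i, (Real.sqrt (π a) * π a) * S :=
          Finset.sum_le_sum hterm
      _ = T * S := by rw [← Finset.sum_mul]
      _ ≤ S ^ 2 := by nlinarith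
  clear_value S T R
  -- main pointwise bound
  have hmain : ∑ a, π a * ((if a = i then ℓ i else 0) -
      π i * Real.sqrt (π a) * ℓ a / S) ^ 2 ≤
      π i * T ^ 2 / S ^ 2 + π i ^ 2 * R / S ^ 2 := by
    have hsplit := Finset.sum_erase_add Finset.univ
      (fun a => π a * ((if a = i then ℓ i else 0) -
        π i * Real.sqrt (π a) * ℓ a / S) ^ 2) (Finset.mem_univ i)
    rw [← hsplit]
    have hi_term : π i * ((if i = i then ℓ i else 0) -
        π i * Real.sqrt (π i) * ℓ i / S) ^ 2 ≤ π i * T ^ 2 / S ^ 2 := by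
      rw [if_pos rfl]
      have hval : ℓ i - π i * Real.sqrt (π i) * ℓ i / S = ℓ i * T / S := by
        field_simp
        linear_combination (-(ℓ i)) * hTS
      rw [hval]
      have hl2 : (ℓ i) ^ 2 ≤ 1 := by
        have h := hℓ i
        nlinarith [h.1, h.2]
      rw [div_pow, mul_pow, ← mul_div_assoc]
      apply (div_le_div_iff_of_pos_right (by positivity : (0:ℝ) < S ^ 2)).mpr
      nlinarith [mul_nonneg (mul_nonneg hp0.le (sq_nonneg T))
        (by nlinarith [(hℓ i).1, (hℓ i).2] : (0:ℝ) ≤ 1 - (ℓ i) ^ 2)]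
    have he_term : ∀ a ∈ Finset.univ.erase i,
        π a * ((if a = i then ℓ i else 0) -
          π i * Real.sqrt (π a) * ℓ a / S) ^ 2 ≤ π i ^ 2 * (π a) ^ 2 / S ^ 2 := by
      intro a ha
      have hne : a ≠ i := (Finset.mem_erase.mp ha).1
      rw [if_neg hne]
      have hxx : Real.sqrt (π a) * Real.sqrt (π a) = π a := Real.mul_self_sqrt (hpos a).le
      have hl2 : (ℓ a) ^ 2 ≤ 1 := by
        have h := hℓ a
        nlinarith [h.1, h.2]
      have hnum : π a * (π i * Real.sqrt (π a) * ℓ a) ^ 2 =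
          π i ^ 2 * ((π a) ^ 2 * (ℓ a) ^ 2) := by
        linear_combination (π i ^ 2 * ℓ a ^ 2 * π a) * hxx
      have heq : π a * ((0 : ℝ) - π i * Real.sqrt (π a) * ℓ a / S) ^ 2 =
          π i ^ 2 * ((π a) ^ 2 * (ℓ a) ^ 2) / S ^ 2 := by
        rw [zero_sub, neg_sq, div_pow, ← mul_div_assoc, hnum]
      rw [heq]
      apply (div_le_div_iff_of_pos_right (by positivity : (0:ℝ) < S ^ 2)).mpr
      nlinarith [sq_nonneg (π i), sq_nonneg (π a),
        mul_nonneg (sq_nonneg (π i)) (sq_nonneg (π a))]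
    calc (∑ a ∈ Finset.univ.erase i, π a * ((if a = i then ℓ i else 0) -
          π i * Real.sqrt (π a) * ℓ a / S) ^ 2) +
        π i * ((if i = i then ℓ i else 0) - π i * Real.sqrt (π i) * ℓ i / S) ^ 2
        ≤ (∑ a ∈ Finset.univ.erase i, π i ^ 2 * (π a) ^ 2 / S ^ 2) +
          π i * T ^ 2 / S ^ 2 :=
        add_le_add (Finset.sum_le_sum he_term) hi_term
      _ = π i * T ^ 2 / S ^ 2 + π i ^ 2 * R / S ^ 2 := by
          rw [hRdef, Finset.mul_sum, Finset.sum_div, add_comm]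
  -- conclude by case analysis
  rcases le_or_gt (π i) (1/2) with hc | hc
  · have h1 : π i * T ^ 2 / S ^ 2 ≤ π i := by
      rw [div_le_iff₀ (by positivity)]
      exact mul_le_mul_of_nonneg_left (pow_le_pow_left₀ hT0 hTleS 2) hp0.le
    have h2 : π i ^ 2 * R / S ^ 2 ≤ π i := by
      rw [div_le_iff₀ (by positivity)]
      nlinarith [mul_le_mul_of_nonneg_left hkey hp0.le]
    nlinarith [hmain, h1, h2, hp0]
  · have hsq : (Real.sqrt (π i) * π i) ^ 2 = π i ^ 3 := by
      rw [mul_pow, Real.sq_sqrt hp0.le]; ring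
    have hS2 : 1/8 ≤ S ^ 2 := by
      nlinarith [hfS, hf0 i, hsq, hc]
    have hC : S + 1/4 ≤ 5 * S ^ 2 := by
      nlinarith [sq_nonneg (S - 1/2)]
    have h1 : π i * T ^ 2 / S ^ 2 + π i ^ 2 * R / S ^ 2 ≤ 5 * (π i * (1 - π i)) := by
      rw [← add_div, div_le_iff₀ (by positivity)]
      have hT2 : T ^ 2 ≤ (1 - π i) * S := by nlinarith [hT0, hT1p, hTleS]
      have hpp : 0 ≤ π i * (1 - π i) := mul_nonneg hp0.le (by linarith)
      have hA : π i * T ^ 2 ≤ π i * ((1 - π i) * S) :=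
        mul_le_mul_of_nonneg_left hT2 hp0.le
      have hB : π i ^ 2 * R ≤ π i ^ 2 * (1 - π i) ^ 2 :=
        mul_le_mul_of_nonneg_left hR1p (sq_nonneg _)
      have hD : π i * (1 - π i) ≤ 1/4 := by nlinarith [sq_nonneg (π i - 1/2)]
      have hE : π i ^ 2 * (1 - π i) ^ 2 ≤ (π i * (1 - π i)) * (1/4) := by
        nlinarith [hpp, hD]
      have hF : (π i * (1 - π i)) * (S + 1/4) ≤ (π i * (1 - π i)) * (5 * S ^ 2) :=
        mul_le_mul_of_nonneg_left hC hpp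
      nlinarith [hA, hB, hE, hF]
    linarith [hmain, h1]
end

section
/- Let π be a probability vector on [K]. Then for every i ∈ [K] with π_i > 0, (√π_i·(1 − π_i) − π_i·Σ_{j=1}^K (π_j − π_j²) / Σ_{j=1}^K π_j^{3/2})² ≤ π_i·K. -/
/-- If `π` is a probability vector on `[K]`, then for every `i` with
`π_i > 0`,
`(√π_i (1−π_i) − π_i Σ_j (π_j − π_j²) / Σ_j π_j^{3/2})² ≤ π_i K`. -/
theorem stmt14 (K : ℕ) (π : Fin K → ℝ) (hnn : ∀ j, 0 ≤ π j) (hsum : ∑ j, π j = 1)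
    (i : Fin K) (hi : 0 < π i) :
    (Real.sqrt (π i) * (1 - π i) -
        π i * (∑ j, (π j - (π j) ^ 2)) / ∑ j, Real.sqrt (π j) * π j) ^ 2 ≤
      π i * K := by
  have h1 : ∀ j, π j ≤ 1 := by
    intro j
    calc π j ≤ ∑ k, π k := Finset.single_le_sum (fun k _ => hnn k) (Finset.mem_univ j)
    _ = 1 := hsum
  have hK1 : (1:ℝ) ≤ K := by
    have : 0 < K := i.pos
    exact_mod_cast this
  set T := ∑ j, Real.sqrt (π j) * π j with hT
  set S := ∑ j, (π j - (π j)^2) with hSdef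
  have hTpos : 0 < T := by
    have h0 : 0 < Real.sqrt (π i) * π i := mul_pos (Real.sqrt_pos.mpr hi) hi
    refine lt_of_lt_of_le h0 ?_
    exact Finset.single_le_sum (fun k _ => mul_nonneg (Real.sqrt_nonneg _) (hnn k))
      (Finset.mem_univ i)
  have hS0 : 0 ≤ S := Finset.sum_nonneg fun j _ => by nlinarith [hnn j, h1 j]
  have hS1 : S ≤ 1 := by
    rw [hSdef, ← hsum]
    exact Finset.sum_le_sum fun j _ => by nlinarith [hnn j]
  set U := ∑ j, Real.sqrt (π j) with hUdef
  have hU0 : 0 ≤ U := Finset.sum_nonneg fun j _ => Real.sqrt_nonneg _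
  have hU2 : U^2 ≤ K := by
    have hcs := Finset.sum_mul_sq_le_sq_mul_sq Finset.univ
      (fun j => Real.sqrt (π j)) (fun _ => (1:ℝ))
    simp only [mul_one, one_pow] at hcs
    calc U^2 ≤ (∑ j, Real.sqrt (π j)^2) * (∑ _j : Fin K, (1:ℝ)) := hcs
    _ = K := by
        rw [Finset.sum_congr rfl fun j _ => Real.sq_sqrt (hnn j), hsum]
        simp [Finset.card_univ]
  have hUK : U ≤ Real.sqrt K := by
    have := Real.sqrt_le_sqrt hU2
    rwa [Real.sqrt_sq hU0] at this
  have h1TU : 1 ≤ T * U := by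
    have hcs := Finset.sum_mul_sq_le_sq_mul_sq Finset.univ
      (fun j => Real.sqrt (Real.sqrt (π j) * π j)) (fun j => Real.sqrt (Real.sqrt (π j)))
    have heq : ∀ j : Fin K,
        Real.sqrt (Real.sqrt (π j) * π j) * Real.sqrt (Real.sqrt (π j)) = π j := by
      intro j
      rw [← Real.sqrt_mul (mul_nonneg (Real.sqrt_nonneg _) (hnn j))]
      have h2 : Real.sqrt (π j) * π j * Real.sqrt (π j) = (π j)^2 := by
        rw [mul_comm (Real.sqrt (π j)) (π j), mul_assoc, Real.mul_self_sqrt (hnn j)]; ring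
      rw [h2, Real.sqrt_sq (hnn j)]
    have hL : (∑ j, Real.sqrt (Real.sqrt (π j) * π j) * Real.sqrt (Real.sqrt (π j))) = 1 := by
      rw [Finset.sum_congr rfl fun j _ => heq j, hsum]
    have hR1 : (∑ j, Real.sqrt (Real.sqrt (π j) * π j) ^ 2) = T := by
      refine Finset.sum_congr rfl fun j _ => ?_
      exact Real.sq_sqrt (mul_nonneg (Real.sqrt_nonneg _) (hnn j))
    have hR2 : (∑ j, Real.sqrt (Real.sqrt (π j)) ^ 2) = U := by
      refine Finset.sum_congr rfl fun j _ => ?_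
      exact Real.sq_sqrt (Real.sqrt_nonneg _)
    rw [hL, hR1, hR2, one_pow] at hcs
    exact hcs
  have hsK0 : 0 ≤ Real.sqrt K := Real.sqrt_nonneg _
  have h1TK : 1 ≤ T * Real.sqrt K := by
    calc (1:ℝ) ≤ T * U := h1TU
    _ ≤ T * Real.sqrt K := mul_le_mul_of_nonneg_left hUK hTpos.le
  have hb0 : 0 ≤ π i * S / T := div_nonneg (mul_nonneg hi.le hS0) hTpos.le
  have hbK : π i * S / T ≤ π i * Real.sqrt K := by
    rw [div_le_iff₀ hTpos]
    nlinarith [mul_le_mul_of_nonneg_left hS1 hi.le, mul_le_mul_of_nonneg_left h1TK hi.le]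
  have ha0 : 0 ≤ Real.sqrt (π i) * (1 - π i) :=
    mul_nonneg (Real.sqrt_nonneg _) (by linarith [h1 i])
  have ha2 : (Real.sqrt (π i) * (1 - π i))^2 ≤ π i * K := by
    have h3 : (Real.sqrt (π i) * (1 - π i))^2 = π i * (1 - π i)^2 := by
      rw [mul_pow, Real.sq_sqrt hi.le]
    rw [h3]
    have h5 : (1 - π i)^2 ≤ 1 := by nlinarith [h1 i, hnn i]
    nlinarith [mul_le_mul_of_nonneg_left h5 hi.le, mul_le_mul_of_nonneg_left hK1 hi.le]
  have hb2 : (π i * S / T)^2 ≤ π i * K := by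
    have h4 : (π i * S / T)^2 ≤ (π i * Real.sqrt K)^2 := pow_le_pow_left₀ hb0 hbK 2
    calc (π i * S / T)^2 ≤ (π i * Real.sqrt K)^2 := h4
    _ = π i ^ 2 * K := by rw [mul_pow, Real.sq_sqrt (Nat.cast_nonneg K)]
    _ ≤ π i * K := by nlinarith [h1 i, hi, hK1]
  rcases le_total (Real.sqrt (π i) * (1 - π i)) (π i * S / T) with h | h
  · nlinarith
  · nlinarith
end

section
/- Let T, K ≥ 1 be integers, let i* ∈ [K], let Δ_i > 0 for every i ≠ i*, let a, b ≥ 0, and let π_1, …, π_T be probability vectors on [K]. If Σ_{t=1}^T Σ_{i ≠ i*} π_{t,i} Δ_i ≤ Σ_{t=1}^T Σ_{i ≠ i*} (a·π_{t,i} + b·√π_{t,i})/√t, then Σ_{t=1}^T Σ_{i ≠ i*} π_{t,i} Δ_i ≤ Σ_{i ≠ i*} (18a² + 12b² + 6b²(1 + log T))/Δ_i. -/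
lemma sum_inv_nat_le (N : ℕ) :
    ∑ t ∈ Finset.Icc 1 N, (1 : ℝ) / t ≤ 1 + Real.log N := by
  have := harmonic_le_one_add_log N
  rw [harmonic_eq_sum_Icc] at this
  push_cast at this
  simpa [one_div] using this

lemma sum_inv_sqrt_le (N : ℕ) :
    ∑ t ∈ Finset.Icc 1 N, (1 : ℝ) / Real.sqrt t ≤ 2 * Real.sqrt N := by
  induction N with
  | zero => simp
  | succ n ih =>
    rw [show Finset.Icc 1 (n+1) = insert (n+1) (Finset.Icc 1 n) by
      ext x; simp only [Finset.mem_Icc, Finset.mem_insert]; omega, Finset.sum_insert (by simp)]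
    have h1 : (0:ℝ) ≤ n := by positivity
    have h2 : Real.sqrt n ^ 2 = n := Real.sq_sqrt h1
    have h3 : Real.sqrt (n+1) ^ 2 = (n+1:ℝ) := Real.sq_sqrt (by positivity)
    have h4 : (0:ℝ) < Real.sqrt ((n:ℝ)+1) := Real.sqrt_pos.mpr (by positivity)
    have h5 : Real.sqrt n ≤ Real.sqrt (n+1) := Real.sqrt_le_sqrt (by linarith)
    have h6 : 1 / Real.sqrt ((n:ℝ)+1) ≤ 2 * Real.sqrt ((n:ℝ)+1) - 2 * Real.sqrt n := by
      rw [div_le_iff₀ h4]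
      nlinarith [Real.sqrt_nonneg (n:ℝ)]
    push_cast
    push_cast at ih
    linarith

lemma per_arm (T : ℕ) (Δ a b : ℝ) (hΔ : 0 < Δ) (ha : 0 ≤ a) (hb : 0 ≤ b)
    (p : ℕ → ℝ) (hp0 : ∀ t ∈ Finset.Icc 1 T, 0 ≤ p t) (hp1 : ∀ t ∈ Finset.Icc 1 T, p t ≤ 1) :
    ∑ t ∈ Finset.Icc 1 T, (a * p t + b * Real.sqrt (p t)) / Real.sqrt t ≤
      (1/3) * ∑ t ∈ Finset.Icc 1 T, p t * Δ +
        (8 * a ^ 2 + 3 * b ^ 2 * (1 + Real.log T)) / Δ := by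
  set h : ℕ → ℝ := fun t => if (t : ℝ) ≤ (4 * a / Δ) ^ 2 then a / Real.sqrt t else 0 with hh
  -- pointwise bound
  have key : ∀ t ∈ Finset.Icc 1 T,
      (a * p t + b * Real.sqrt (p t)) / Real.sqrt t ≤
        p t * Δ / 3 + h t + 3 * b ^ 2 / (t * Δ) := by
    intro t ht
    have ht1 : 1 ≤ t := (Finset.mem_Icc.mp ht).1
    have htR : (1:ℝ) ≤ (t:ℝ) := by exact_mod_cast ht1
    set st := Real.sqrt t with hst
    have hst1 : 1 ≤ st := by
      rw [hst, show (1:ℝ) = Real.sqrt 1 by simp]; exact Real.sqrt_le_sqrt htR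
    have hst0 : 0 < st := lt_of_lt_of_le one_pos hst1
    have hst2 : st ^ 2 = (t : ℝ) := Real.sq_sqrt (by positivity)
    have hp0' := hp0 t ht
    have hp1' := hp1 t ht
    set sp := Real.sqrt (p t) with hsp
    have hsp0 : 0 ≤ sp := Real.sqrt_nonneg _
    have hsp2 : sp ^ 2 = p t := Real.sq_sqrt hp0'
    have hA : a * p t / st ≤ p t * Δ / 4 + h t := by
      rw [hh]
      by_cases hc : (t : ℝ) ≤ (4 * a / Δ) ^ 2
      · simp only [hc, if_pos]
        have h1 : a * p t / st ≤ a / st := by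
          apply div_le_div_of_nonneg_right ?_ hst0.le
          nlinarith
        nlinarith [h1, mul_nonneg hp0' hΔ.le]
      · simp only [hc, if_neg, not_false_iff, add_zero]
        push_neg at hc
        have hc2 : 16 * a ^ 2 < st ^ 2 * Δ ^ 2 := by
          have h16 : (4 * a / Δ) ^ 2 * Δ ^ 2 = 16 * a ^ 2 := by field_simp; ring
          nlinarith [mul_lt_mul_of_pos_right hc (by positivity : (0:ℝ) < Δ ^ 2)]
        have hst4 : 4 * a ≤ st * Δ := by
          by_contra hcon
          push_neg at hcon
          have h46 : (0:ℝ) ≤ 4 * a + st * Δ := by positivity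
          nlinarith [mul_nonneg (le_of_lt (sub_pos.mpr hcon)) h46]
        rw [div_le_iff₀ hst0]
        nlinarith [mul_nonneg hp0' (sub_nonneg.mpr hst4)]
    have hB : b * sp / st ≤ p t * Δ / 12 + 3 * b ^ 2 / ((t : ℝ) * Δ) := by
      rw [← hst2, ← hsp2]
      rw [div_add_div _ _ (by norm_num) (by positivity),
        div_le_div_iff₀ hst0 (by positivity)]
      nlinarith [mul_nonneg hst0.le (sq_nonneg (sp * Δ * st - 6 * b))]
    calc (a * p t + b * sp) / st = a * p t / st + b * sp / st := by ring
      _ ≤ (p t * Δ / 4 + h t) + (p t * Δ / 12 + 3 * b ^ 2 / ((t:ℝ) * Δ)) := add_le_add hA hB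
      _ = p t * Δ / 3 + h t + 3 * b ^ 2 / ((t:ℝ) * Δ) := by ring
  have step1 := Finset.sum_le_sum key
  rw [Finset.sum_add_distrib, Finset.sum_add_distrib] at step1
  -- bound the h sum
  have hsumh : ∑ t ∈ Finset.Icc 1 T, h t ≤ 8 * a ^ 2 / Δ := by
    have h1 : ∑ t ∈ Finset.Icc 1 T, h t ≤
        ∑ t ∈ Finset.Icc 1 (Nat.floor ((4 * a / Δ) ^ 2)), a / Real.sqrt t := by
      rw [hh, Finset.sum_ite, Finset.sum_const_zero, add_zero]
      apply Finset.sum_le_sum_of_subset_of_nonneg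
      · intro x hx
        simp only [Finset.mem_filter, Finset.mem_Icc] at hx ⊢
        exact ⟨hx.1.1, Nat.le_floor hx.2⟩
      · intros; positivity
    have h2 : ∑ t ∈ Finset.Icc 1 (Nat.floor ((4 * a / Δ) ^ 2)), a / Real.sqrt t
        = a * ∑ t ∈ Finset.Icc 1 (Nat.floor ((4 * a / Δ) ^ 2)), 1 / Real.sqrt t := by
      rw [Finset.mul_sum]; apply Finset.sum_congr rfl; intros; ring
    have h3 : Real.sqrt (Nat.floor ((4 * a / Δ) ^ 2)) ≤ 4 * a / Δ := by
      have := Real.sqrt_le_sqrt (Nat.floor_le (by positivity : (0:ℝ) ≤ (4 * a / Δ) ^ 2))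
      rwa [Real.sqrt_sq (by positivity)] at this
    have h4 : a * ∑ t ∈ Finset.Icc 1 (Nat.floor ((4 * a / Δ) ^ 2)), 1 / Real.sqrt t
        ≤ a * (2 * (4 * a / Δ)) := by
      apply mul_le_mul_of_nonneg_left _ ha
      exact (sum_inv_sqrt_le _).trans (by linarith)
    calc ∑ t ∈ Finset.Icc 1 T, h t
        ≤ a * ∑ t ∈ Finset.Icc 1 (Nat.floor ((4 * a / Δ) ^ 2)), 1 / Real.sqrt t := by
          rw [← h2]; exact h1
      _ ≤ a * (2 * (4 * a / Δ)) := h4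
      _ = 8 * a ^ 2 / Δ := by ring
  -- bound the 1/t sum
  have hsumt : ∑ t ∈ Finset.Icc 1 T, 3 * b ^ 2 / ((t : ℝ) * Δ) ≤
      3 * b ^ 2 * (1 + Real.log T) / Δ := by
    have h1 : ∀ t ∈ Finset.Icc 1 T, 3 * b ^ 2 / ((t:ℝ) * Δ) = 3 * b ^ 2 / Δ * (1 / t) := by
      intro t ht; ring
    rw [Finset.sum_congr rfl h1, ← Finset.mul_sum]
    calc 3 * b ^ 2 / Δ * ∑ t ∈ Finset.Icc 1 T, (1:ℝ) / t
        ≤ 3 * b ^ 2 / Δ * (1 + Real.log T) :=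
          mul_le_mul_of_nonneg_left (sum_inv_nat_le T) (by positivity)
      _ = 3 * b ^ 2 * (1 + Real.log T) / Δ := by ring
  have e1 : ∑ t ∈ Finset.Icc 1 T, p t * Δ / 3 = (1/3) * ∑ t ∈ Finset.Icc 1 T, p t * Δ := by
    rw [Finset.mul_sum]; apply Finset.sum_congr rfl; intros; ring
  rw [e1] at step1
  have e2 : (8 * a ^ 2 + 3 * b ^ 2 * (1 + Real.log T)) / Δ
      = 8 * a ^ 2 / Δ + 3 * b ^ 2 * (1 + Real.log T) / Δ := by ring
  rw [e2]
  linarith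

/-- the self-bounding trick. If the gap-weighted play probabilities are
bounded by the second-order quantity `Σ_t Σ_{i≠i*} (a π_{t,i} + b √π_{t,i})/√t`, then they
are bounded by `Σ_{i≠i*} (18a² + 12b² + 6b²(1 + log T))/Δ_i`. -/
theorem stmt15 (T K : ℕ) (hT : 1 ≤ T) (hK : 1 ≤ K) (istar : Fin K)
    (Δ : Fin K → ℝ) (hΔ : ∀ i, i ≠ istar → 0 < Δ i)
    (a b : ℝ) (ha : 0 ≤ a) (hb : 0 ≤ b)
    (π : ℕ → Fin K → ℝ)
    (hπ : ∀ t ∈ Finset.Icc 1 T, (∀ i, 0 ≤ π t i) ∧ ∑ i, π t i = 1)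
    (hself : ∑ t ∈ Finset.Icc 1 T, ∑ i ∈ Finset.univ.erase istar, π t i * Δ i ≤
      ∑ t ∈ Finset.Icc 1 T, ∑ i ∈ Finset.univ.erase istar,
        (a * π t i + b * Real.sqrt (π t i)) / Real.sqrt t) :
    ∑ t ∈ Finset.Icc 1 T, ∑ i ∈ Finset.univ.erase istar, π t i * Δ i ≤
      ∑ i ∈ Finset.univ.erase istar,
        (18 * a ^ 2 + 12 * b ^ 2 + 6 * b ^ 2 * (1 + Real.log T)) / Δ i := by
  have hlog : 0 ≤ Real.log T := Real.log_nonneg (by exact_mod_cast hT)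
  have harm : ∀ i ∈ Finset.univ.erase istar,
      ∑ t ∈ Finset.Icc 1 T, (a * π t i + b * Real.sqrt (π t i)) / Real.sqrt t ≤
        (1/3) * ∑ t ∈ Finset.Icc 1 T, π t i * Δ i +
          (8 * a ^ 2 + 3 * b ^ 2 * (1 + Real.log T)) / Δ i := by
    intro i hi
    have hine : i ≠ istar := Finset.ne_of_mem_erase hi
    apply per_arm T (Δ i) a b (hΔ i hine) ha hb
    · intro t ht; exact (hπ t ht).1 i
    · intro t ht
      have h1 := Finset.single_le_sum (f := π t) (fun j _ => (hπ t ht).1 j) (Finset.mem_univ i)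
      rwa [(hπ t ht).2] at h1
  have hswap1 : ∑ t ∈ Finset.Icc 1 T, ∑ i ∈ Finset.univ.erase istar,
      (a * π t i + b * Real.sqrt (π t i)) / Real.sqrt t
      = ∑ i ∈ Finset.univ.erase istar, ∑ t ∈ Finset.Icc 1 T,
        (a * π t i + b * Real.sqrt (π t i)) / Real.sqrt t := Finset.sum_comm
  have hswap2 : ∑ i ∈ Finset.univ.erase istar, ∑ t ∈ Finset.Icc 1 T, π t i * Δ i
      = ∑ t ∈ Finset.Icc 1 T, ∑ i ∈ Finset.univ.erase istar, π t i * Δ i := Finset.sum_comm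
  have hstep : ∑ t ∈ Finset.Icc 1 T, ∑ i ∈ Finset.univ.erase istar, π t i * Δ i ≤
      (1/3) * ∑ t ∈ Finset.Icc 1 T, ∑ i ∈ Finset.univ.erase istar, π t i * Δ i +
        ∑ i ∈ Finset.univ.erase istar, (8 * a ^ 2 + 3 * b ^ 2 * (1 + Real.log T)) / Δ i := by
    calc ∑ t ∈ Finset.Icc 1 T, ∑ i ∈ Finset.univ.erase istar, π t i * Δ i
        ≤ ∑ t ∈ Finset.Icc 1 T, ∑ i ∈ Finset.univ.erase istar,
            (a * π t i + b * Real.sqrt (π t i)) / Real.sqrt t := hself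
      _ = ∑ i ∈ Finset.univ.erase istar, ∑ t ∈ Finset.Icc 1 T,
            (a * π t i + b * Real.sqrt (π t i)) / Real.sqrt t := hswap1
      _ ≤ ∑ i ∈ Finset.univ.erase istar, ((1/3) * ∑ t ∈ Finset.Icc 1 T, π t i * Δ i +
            (8 * a ^ 2 + 3 * b ^ 2 * (1 + Real.log T)) / Δ i) := Finset.sum_le_sum harm
      _ = (1/3) * (∑ i ∈ Finset.univ.erase istar, ∑ t ∈ Finset.Icc 1 T, π t i * Δ i) +
            ∑ i ∈ Finset.univ.erase istar, (8 * a ^ 2 + 3 * b ^ 2 * (1 + Real.log T)) / Δ i := by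
          rw [Finset.sum_add_distrib, Finset.mul_sum]
      _ = (1/3) * ∑ t ∈ Finset.Icc 1 T, ∑ i ∈ Finset.univ.erase istar, π t i * Δ i +
            ∑ i ∈ Finset.univ.erase istar, (8 * a ^ 2 + 3 * b ^ 2 * (1 + Real.log T)) / Δ i := by
          rw [hswap2]
  have hfin : ∑ i ∈ Finset.univ.erase istar,
      (3/2) * ((8 * a ^ 2 + 3 * b ^ 2 * (1 + Real.log T)) / Δ i) ≤
      ∑ i ∈ Finset.univ.erase istar,
        (18 * a ^ 2 + 12 * b ^ 2 + 6 * b ^ 2 * (1 + Real.log T)) / Δ i := by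
    apply Finset.sum_le_sum
    intro i hi
    have hine : i ≠ istar := Finset.ne_of_mem_erase hi
    rw [show (3/2) * ((8 * a ^ 2 + 3 * b ^ 2 * (1 + Real.log T)) / Δ i)
      = ((3/2) * (8 * a ^ 2 + 3 * b ^ 2 * (1 + Real.log T))) / Δ i by ring]
    apply div_le_div_of_nonneg_right _ (hΔ i hine).le
    nlinarith [mul_nonneg (sq_nonneg b) hlog, sq_nonneg a, sq_nonneg b]
  
  rw [← Finset.mul_sum] at hfin
  linarith [hfin]
end

section
/- Let T ≥ 1 be an integer, Δ > 0, a, b ≥ 0, and x_1, …, x_T ∈ [0,1]. Then: (i) Σ_{t=1}^T x_t·(a/√t − Δ/3) ≤ 6a²/Δ; (ii) Σ_{t=1}^T √x_t·(b/√t − Δ·√x_t/3) ≤ 8b²/Δ + 2b²(1 + log T)/Δ. -/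
/-- Partial sums of `1/√t` are at most `2√N`. -/
lemma sqrt_partial_sum (N : ℕ) :
    ∑ t ∈ Finset.Icc 1 N, 1 / Real.sqrt t ≤ 2 * Real.sqrt N := by
  induction N with
  | zero => simp
  | succ n ih =>
    rw [Finset.sum_Icc_succ_top (by omega)]
    have h1 : Real.sqrt n ≤ Real.sqrt (n + 1) := by
      apply Real.sqrt_le_sqrt; push_cast; linarith
    have h2 : (0:ℝ) < Real.sqrt (n + 1) := by
      apply Real.sqrt_pos.2; positivity
    have hsq : Real.sqrt ((n:ℝ)+1) * Real.sqrt ((n:ℝ)+1) = (n:ℝ)+1 :=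
      Real.mul_self_sqrt (by positivity)
    have hmul : Real.sqrt (n:ℝ) * Real.sqrt ((n:ℝ)+1) ≤ (n:ℝ) + 1/2 := by
      rw [← Real.sqrt_mul (by positivity)]
      calc Real.sqrt ((n:ℝ)*((n:ℝ)+1)) ≤ Real.sqrt (((n:ℝ)+1/2)^2) :=
            Real.sqrt_le_sqrt (by nlinarith)
        _ = (n:ℝ)+1/2 := Real.sqrt_sq (by positivity)
    have key : 1 / Real.sqrt ((n:ℝ) + 1) ≤ 2 * Real.sqrt ((n:ℝ)+1) - 2 * Real.sqrt (n:ℝ) := by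
      rw [div_le_iff₀ h2]
      nlinarith [hsq, hmul]
    push_cast
    push_cast at key ih
    linarith

/-- Harmonic partial sums bound. -/
lemma harmonic_partial_sum (T : ℕ) (hT : 1 ≤ T) :
    ∑ t ∈ Finset.Icc 1 T, 1 / (t:ℝ) ≤ 1 + Real.log T := by
  have h := harmonic_le_one_add_log T
  rw [harmonic_eq_sum_Icc] at h
  have : ((∑ i ∈ Finset.Icc 1 T, (i:ℚ)⁻¹ : ℚ) : ℝ) = ∑ t ∈ Finset.Icc 1 T, 1 / (t:ℝ) := by
    push_cast
    simp [one_div]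
  rw [← this]
  exact_mod_cast h

/-- the two single-sequence estimates underlying the self-bounding trick.
For `T ≥ 1`, `Δ > 0`, `a, b ≥ 0` and `x_1, …, x_T ∈ [0,1]`:
(i) `Σ_{t=1}^T x_t (a/√t − Δ/3) ≤ 6a²/Δ`;
(ii) `Σ_{t=1}^T √x_t (b/√t − Δ√x_t/3) ≤ 8b²/Δ + 2b²(1 + log T)/Δ`. -/
theorem stmt16 (T : ℕ) (hT : 1 ≤ T) (Δ a b : ℝ) (hΔ : 0 < Δ)
    (ha : 0 ≤ a) (hb : 0 ≤ b) (x : ℕ → ℝ)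
    (hx : ∀ t ∈ Finset.Icc 1 T, x t ∈ Set.Icc (0 : ℝ) 1) :
    (∑ t ∈ Finset.Icc 1 T, x t * (a / Real.sqrt t - Δ / 3) ≤ 6 * a ^ 2 / Δ) ∧
    (∑ t ∈ Finset.Icc 1 T,
        Real.sqrt (x t) * (b / Real.sqrt t - Δ * Real.sqrt (x t) / 3) ≤
      8 * b ^ 2 / Δ + 2 * b ^ 2 * (1 + Real.log T) / Δ) := by
  constructor
  · -- part (i)
    set N : ℕ := ⌊9 * a ^ 2 / Δ ^ 2⌋₊ with hN
    have hNv : 9 * a ^ 2 / Δ ^ 2 < (N:ℝ) + 1 := Nat.lt_floor_add_one _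
    have hsplit : ∑ t ∈ Finset.Icc 1 T, x t * (a / Real.sqrt t - Δ / 3)
        ≤ ∑ t ∈ (Finset.Icc 1 T).filter (· ≤ N), (a / Real.sqrt t) := by
      rw [← Finset.sum_filter_add_sum_filter_not (Finset.Icc 1 T) (· ≤ N)]
      have h2 : ∑ t ∈ (Finset.Icc 1 T).filter (¬ · ≤ N),
          x t * (a / Real.sqrt t - Δ / 3) ≤ 0 := by
        apply Finset.sum_nonpos
        intro t ht
        simp only [Finset.mem_filter, Finset.mem_Icc, not_le] at ht
        obtain ⟨⟨ht1, ht2⟩, htN⟩ := ht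
        have hxt := hx t (Finset.mem_Icc.2 ⟨ht1, ht2⟩)
        have hst : (0:ℝ) < Real.sqrt t := Real.sqrt_pos.2 (by positivity)
        have hta : 9 * a ^ 2 / Δ ^ 2 ≤ (t:ℝ) := by
          have : (N:ℝ) + 1 ≤ (t:ℝ) := by exact_mod_cast htN
          linarith
        have hge : 3 * a ≤ Δ * Real.sqrt t := by
          have h3 : 3 * a / Δ ≤ Real.sqrt t := by
            rw [show (3 * a / Δ) = Real.sqrt ((3*a/Δ)^2) from
              (Real.sqrt_sq (by positivity)).symm]
            apply Real.sqrt_le_sqrt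
            rw [div_pow]
            have heq : (3*a)^2/Δ^2 = 9*a^2/Δ^2 := by ring
            linarith
          calc 3 * a = Δ * (3 * a / Δ) := by field_simp
            _ ≤ Δ * Real.sqrt t := by nlinarith
        apply mul_nonpos_of_nonneg_of_nonpos hxt.1
        rw [sub_nonpos, div_le_div_iff₀ hst (by norm_num)]
        linarith
      have h1 : ∑ t ∈ (Finset.Icc 1 T).filter (· ≤ N),
          x t * (a / Real.sqrt t - Δ / 3)
          ≤ ∑ t ∈ (Finset.Icc 1 T).filter (· ≤ N), (a / Real.sqrt t) := by
        apply Finset.sum_le_sum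
        intro t ht
        simp only [Finset.mem_filter, Finset.mem_Icc] at ht
        have hxt := hx t (Finset.mem_Icc.2 ht.1)
        have hst : (0:ℝ) ≤ Real.sqrt t := Real.sqrt_nonneg _
        have hdiv : (0:ℝ) ≤ a / Real.sqrt t := by positivity
        nlinarith [hxt.1, hxt.2]
      linarith
    have hsub : ∑ t ∈ (Finset.Icc 1 T).filter (· ≤ N), (a / Real.sqrt t)
        ≤ ∑ t ∈ Finset.Icc 1 N, (a / Real.sqrt t) := by
      apply Finset.sum_le_sum_of_subset_of_nonneg
      · intro t ht
        simp only [Finset.mem_filter, Finset.mem_Icc] at *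
        exact ⟨ht.1.1, ht.2⟩
      · intro t _ _; positivity
    have hfin : ∑ t ∈ Finset.Icc 1 N, (a / Real.sqrt t) ≤ 6 * a ^ 2 / Δ := by
      have : ∑ t ∈ Finset.Icc 1 N, (a / Real.sqrt t)
          = a * ∑ t ∈ Finset.Icc 1 N, 1 / Real.sqrt t := by
        rw [Finset.mul_sum]; congr 1; ext t; ring
      rw [this]
      have h2N := sqrt_partial_sum N
      have hNle : Real.sqrt N ≤ 3 * a / Δ := by
        rw [show (3 * a / Δ) = Real.sqrt ((3*a/Δ)^2) from
          (Real.sqrt_sq (by positivity)).symm]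
        apply Real.sqrt_le_sqrt
        have := Nat.floor_le (by positivity : (0:ℝ) ≤ 9 * a ^ 2 / Δ ^ 2)
        rw [div_pow]
        calc (N:ℝ) ≤ 9 * a ^ 2 / Δ ^ 2 := this
          _ = (3*a)^2 / Δ^2 := by ring_nf
      have hsumnn : (0:ℝ) ≤ ∑ t ∈ Finset.Icc 1 N, 1 / Real.sqrt t := by
        apply Finset.sum_nonneg; intros; positivity
      calc a * ∑ t ∈ Finset.Icc 1 N, 1 / Real.sqrt t
          ≤ a * (2 * Real.sqrt N) := by nlinarith
        _ ≤ a * (2 * (3 * a / Δ)) := by nlinarith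
        _ = 6 * a ^ 2 / Δ := by ring
    linarith
  · -- part (ii)
    have hlogT : 0 ≤ Real.log T := Real.log_nonneg (by exact_mod_cast hT)
    have hpt : ∑ t ∈ Finset.Icc 1 T,
        Real.sqrt (x t) * (b / Real.sqrt t - Δ * Real.sqrt (x t) / 3)
        ≤ ∑ t ∈ Finset.Icc 1 T, 3 * b ^ 2 / (4 * Δ) * (1 / (t:ℝ)) := by
      apply Finset.sum_le_sum
      intro t ht
      simp only [Finset.mem_Icc] at ht
      have ht1 : 1 ≤ t := ht.1
      have htpos : (0:ℝ) < (t:ℝ) := by exact_mod_cast ht1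
      have hst : (0:ℝ) < Real.sqrt t := Real.sqrt_pos.2 htpos
      have hst2 : Real.sqrt t ^ 2 = (t:ℝ) := Real.sq_sqrt htpos.le
      set u := Real.sqrt (x t) with hu
      have hu0 : 0 ≤ u := Real.sqrt_nonneg _
      have key : u * (b / Real.sqrt t - Δ * u / 3) ≤ 3 * (b / Real.sqrt t)^2 / (4 * Δ) := by
        set c := b / Real.sqrt t with hc
        have hc0 : 0 ≤ c := by positivity
        rw [le_div_iff₀ (by positivity : (0:ℝ) < 4 * Δ)]
        nlinarith [sq_nonneg (2 * Δ * u - 3 * c)]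
      calc u * (b / Real.sqrt t - Δ * u / 3)
          ≤ 3 * (b / Real.sqrt t)^2 / (4 * Δ) := key
        _ = 3 * b ^ 2 / (4 * Δ) * (1 / (t:ℝ)) := by
            rw [div_pow, hst2]; ring
    have hsum : ∑ t ∈ Finset.Icc 1 T, 3 * b ^ 2 / (4 * Δ) * (1 / (t:ℝ))
        = 3 * b ^ 2 / (4 * Δ) * ∑ t ∈ Finset.Icc 1 T, 1 / (t:ℝ) := by
      rw [Finset.mul_sum]
    have hh := harmonic_partial_sum T hT
    have hhnn : (0:ℝ) ≤ ∑ t ∈ Finset.Icc 1 T, 1 / (t:ℝ) := by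
      apply Finset.sum_nonneg; intros; positivity
    have hfac : (0:ℝ) ≤ 3 * b ^ 2 / (4 * Δ) := by positivity
    calc ∑ t ∈ Finset.Icc 1 T,
          Real.sqrt (x t) * (b / Real.sqrt t - Δ * Real.sqrt (x t) / 3)
        ≤ 3 * b ^ 2 / (4 * Δ) * ∑ t ∈ Finset.Icc 1 T, 1 / (t:ℝ) := by
          rw [← hsum]; exact hpt
      _ ≤ 3 * b ^ 2 / (4 * Δ) * (1 + Real.log T) := by nlinarith
      _ ≤ 8 * b ^ 2 / Δ + 2 * b ^ 2 * (1 + Real.log T) / Δ := by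
          have h8 : (0:ℝ) ≤ 8 * b ^ 2 / Δ := by positivity
          have h1 : 3 * b ^ 2 / (4 * Δ) * (1 + Real.log T)
              ≤ 2 * b ^ 2 * (1 + Real.log T) / Δ := by
            rw [div_mul_eq_mul_div, div_le_div_iff₀ (by positivity) hΔ]
            nlinarith [mul_nonneg (mul_nonneg (sq_nonneg b)
              (by linarith : (0:ℝ) ≤ 1 + Real.log T)) hΔ.le]
          linarith
end

section
/- Let π ∈ (0,1]^K, let 0 < η' ≤ η, and let c ∈ ℝ^K satisfy η'·√π_i·c_i ≥ −1/2 for every i. Define π̃_i = π_i/(1 + η'√π_i c_i)². Then the scaled 1/2-Tsallis Bregman divergence satisfies (1/η)·(−2Σ_{i=1}^K √π_i + 2Σ_{i=1}^K √π̃_i + Σ_{i=1}^K (π_i − π̃_i)/√π̃_i) ≤ 2η·Σ_{i=1}^K π_i^{3/2}·c_i². -/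
lemma key (s x : ℝ) (hs : 0 < s) (hx : -(1/2) ≤ x) :
    -2 * s + 2 * (s / (1 + x)) +
      (s ^ 2 - s ^ 2 / (1 + x) ^ 2) / (s / (1 + x)) ≤ 2 * s * x ^ 2 := by
  have h1 : (0:ℝ) < 1 + x := by linarith
  have key : -2 * s + 2 * (s / (1 + x)) +
      (s ^ 2 - s ^ 2 / (1 + x) ^ 2) / (s / (1 + x)) = s * x ^ 2 / (1 + x) := by
    field_simp
    ring
  rw [key, div_le_iff₀ h1]
  nlinarith [sq_nonneg x, mul_nonneg hs.le (sq_nonneg x)]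

/-- deterministic core of the stability bound for the perturbed
1/2-Tsallis mirror-descent update. With `π̃_i = π_i/(1 + η'√π_i c_i)²`,
`(1/η)·D_TS(π, π̃) ≤ 2η·Σ_i π_i^{3/2} c_i²`, where
`D_TS(u,p) = −2Σ√u_i + 2Σ√p_i + Σ(u_i − p_i)/√p_i`. -/
theorem stmt18 (K : ℕ) (η η' : ℝ) (π c : Fin K → ℝ)
    (hπ : ∀ i, π i ∈ Set.Ioc (0 : ℝ) 1)
    (hη' : 0 < η') (hle : η' ≤ η)
    (hc : ∀ i, -(1 / 2) ≤ η' * Real.sqrt (π i) * c i) :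
    (1 / η) * (-2 * ∑ i, Real.sqrt (π i) +
        2 * (∑ i, Real.sqrt (π i / (1 + η' * Real.sqrt (π i) * c i) ^ 2)) +
        ∑ i, (π i - π i / (1 + η' * Real.sqrt (π i) * c i) ^ 2) /
          Real.sqrt (π i / (1 + η' * Real.sqrt (π i) * c i) ^ 2)) ≤
      2 * η * ∑ i, Real.sqrt (π i) * π i * c i ^ 2 := by
  have hη : 0 < η := lt_of_lt_of_le hη' hle
  have hmain : (-2 * ∑ i, Real.sqrt (π i) +
        2 * (∑ i, Real.sqrt (π i / (1 + η' * Real.sqrt (π i) * c i) ^ 2)) +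
        ∑ i, (π i - π i / (1 + η' * Real.sqrt (π i) * c i) ^ 2) /
          Real.sqrt (π i / (1 + η' * Real.sqrt (π i) * c i) ^ 2)) ≤
      ∑ i, 2 * Real.sqrt (π i) * (η' * Real.sqrt (π i) * c i) ^ 2 := by
    rw [Finset.mul_sum, Finset.mul_sum, ← Finset.sum_add_distrib, ← Finset.sum_add_distrib]
    apply Finset.sum_le_sum
    intro i _
    set x := η' * Real.sqrt (π i) * c i with hxdef
    have hx : -(1/2) ≤ x := hc i
    have hpx : (0:ℝ) < 1 + x := by linarith
    have hp : 0 < π i := (hπ i).1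
    have hs : 0 < Real.sqrt (π i) := Real.sqrt_pos.mpr hp
    have hsq : Real.sqrt (π i / (1 + x) ^ 2) = Real.sqrt (π i) / (1 + x) := by
      rw [Real.sqrt_div hp.le, Real.sqrt_sq hpx.le]
    have hpi : π i = Real.sqrt (π i) ^ 2 := (Real.sq_sqrt hp.le).symm
    rw [hsq]
    calc -2 * Real.sqrt (π i) + 2 * (Real.sqrt (π i) / (1 + x)) +
          (π i - π i / (1 + x) ^ 2) / (Real.sqrt (π i) / (1 + x))
        = -2 * Real.sqrt (π i) + 2 * (Real.sqrt (π i) / (1 + x)) +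
          (Real.sqrt (π i) ^ 2 - Real.sqrt (π i) ^ 2 / (1 + x) ^ 2) /
            (Real.sqrt (π i) / (1 + x)) := by rw [← hpi]
      _ ≤ 2 * Real.sqrt (π i) * x ^ 2 := key _ _ hs hx
  calc (1 / η) * (-2 * ∑ i, Real.sqrt (π i) +
        2 * (∑ i, Real.sqrt (π i / (1 + η' * Real.sqrt (π i) * c i) ^ 2)) +
        ∑ i, (π i - π i / (1 + η' * Real.sqrt (π i) * c i) ^ 2) /
          Real.sqrt (π i / (1 + η' * Real.sqrt (π i) * c i) ^ 2))
      ≤ (1 / η) * ∑ i, 2 * Real.sqrt (π i) * (η' * Real.sqrt (π i) * c i) ^ 2 := by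
        apply mul_le_mul_of_nonneg_left hmain (by positivity)
    _ ≤ 2 * η * ∑ i, Real.sqrt (π i) * π i * c i ^ 2 := by
        rw [Finset.mul_sum, Finset.mul_sum]
        apply Finset.sum_le_sum
        intro i _
        have hp : 0 < π i := (hπ i).1
        have hs : 0 ≤ Real.sqrt (π i) := Real.sqrt_nonneg _
        have hsq : Real.sqrt (π i) ^ 2 = π i := Real.sq_sqrt hp.le
        have h1 : (1 / η) * (2 * Real.sqrt (π i) * (η' * Real.sqrt (π i) * c i) ^ 2)
            = (η' ^ 2 / η) * (2 * (Real.sqrt (π i) * π i * c i ^ 2)) := by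
          rw [← hsq]; field_simp; ring_nf
          rw [Real.sqrt_sq hs]
        rw [h1]
        have h2 : η' ^ 2 / η ≤ η := by
          rw [div_le_iff₀ hη]
          nlinarith
        have h3 : 0 ≤ 2 * (Real.sqrt (π i) * π i * c i ^ 2) := by positivity
        calc (η' ^ 2 / η) * (2 * (Real.sqrt (π i) * π i * c i ^ 2))
            ≤ η * (2 * (Real.sqrt (π i) * π i * c i ^ 2)) :=
              mul_le_mul_of_nonneg_right h2 h3
          _ = 2 * η * (Real.sqrt (π i) * π i * c i ^ 2) := by ring
end
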